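/- arXiv:1903.12499 — 7 statements merged into one kernel-verified Lean document; each statement's English description precedes it below -/
import Mathlib

section
/- Let x_1,...,x_r, a, b be non-negative integers and m = x_1 + ... + x_r. If |a - m/2| ≥ |b - m/2|, then S(x_1,...,x_r; a) ≤ S(x_1,...,x_r; b), where S(x_1,...,x_r; c) is the number of integer tuples (y_1,...,y_r) with 0 ≤ y_i ≤ x_i for each i and y_1 + ... + y_r = c. -/
/-!
`S x` is the coefficient sequence of `∏ i, (1 + q + ⋯ + q ^ x i)`, so `S x c` is a sum of
`x 0 + 1` consecutive values of `S (Fin.tail x)`. A sequence that is symmetric about `M / 2` and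
weakly decreasing away from it keeps this shape under such a window sum: the increment at `c` is
`f (c + 1) - f (c - n)`, and for `c + 1 ≤ (M + n) / 2` the point `c + 1` is nearer to `M / 2`
than `c - n` is.
-/

/-- `S x a` is the number of integer tuples `y` with `0 ≤ y i ≤ x i` and sum `a`. -/
def S {r : ℕ} (x : Fin r → ℕ) (a : ℤ) : ℕ :=
  ((Fintype.piFinset fun i => Finset.range (x i + 1)).filter
    (fun y => (∑ i, (y i : ℤ)) = a)).card

open Finset

section SymmUnimodal

variable {α : Type*} {f : ℤ → α} {M : ℤ}

/-- `f` is symmetric about `M / 2` and weakly decreasing in the distance from `M / 2`; the centre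
is doubled so that it stays in `ℤ`. -/
def IsSymmUnimodal [Preorder α] (f : ℤ → α) (M : ℤ) : Prop :=
  ∀ a b, |2 * b - M| ≤ |2 * a - M| → f a ≤ f b

lemma IsSymmUnimodal.apply_sub [PartialOrder α] (hf : IsSymmUnimodal f M) (c : ℤ) :
    f (M - c) = f c := by
  have h : |2 * (M - c) - M| = |2 * c - M| := by rw [← abs_neg]; ring_nf
  exact le_antisymm (hf _ _ h.ge) (hf _ _ h.le)

lemma IsSymmUnimodal.of_le_succ [Preorder α] (symm : ∀ c, f (M - c) = f c)
    (le_succ : ∀ c, 2 * (c + 1) ≤ M → f c ≤ f (c + 1)) : IsSymmUnimodal f M := by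
  have mono : ∀ a b, a ≤ b → 2 * b ≤ M → f a ≤ f b := by
    intro a b hab
    induction b, hab using Int.leInduction with
    | base => exact fun _ => le_rfl
    | succ b hab ih => exact fun hb => (ih (by omega)).trans (le_succ b hb)
  have fold : ∀ c, f (min c (M - c)) = f c := fun c => by
    rcases min_cases c (M - c) with ⟨h, _⟩ | ⟨h, _⟩ <;> rw [h]
    exact symm c
  intro a b hab
  rw [← fold a, ← fold b]
  apply mono
  · rcases abs_cases (2 * a - M) with ⟨_, _⟩ | ⟨_, _⟩ <;>
      rcases abs_cases (2 * b - M) with ⟨_, _⟩ | ⟨_, _⟩ <;> omega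
  · omega

lemma IsSymmUnimodal.sum_range_sub [AddCommMonoid α] [PartialOrder α] [IsOrderedAddMonoid α]
    (hf : IsSymmUnimodal f M) (n : ℕ) :
    IsSymmUnimodal (fun c => ∑ j ∈ range (n + 1), f (c - j)) (M + n) := by
  refine of_le_succ (fun c => ?_) (fun c hc => ?_)
  · rw [← sum_range_reflect]
    refine sum_congr rfl fun j hj => ?_
    have hj : j ≤ n := Nat.lt_succ_iff.mp (mem_range.mp hj)
    rw [← hf.apply_sub]
    congr 1
    push_cast [Nat.add_sub_cancel, Nat.cast_sub hj]
    ring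
  · have hstep : f (c - n) ≤ f (c + 1) := hf _ _ <| by
      rw [abs_of_nonpos (by omega : 2 * (c - n) - M ≤ 0)]
      exact abs_le.mpr ⟨by omega, by omega⟩
    rw [sum_range_succ, sum_range_succ']
    refine add_le_add (le_of_eq (sum_congr rfl fun j _ => ?_)) (by simpa using hstep)
    push_cast
    ring_nf

end SymmUnimodal

lemma S_fin_zero (x : Fin 0 → ℕ) (c : ℤ) : S x c = if c = 0 then 1 else 0 := by
  split_ifs with hc <;> simp [S, eq_comm, hc]

lemma S_fin_succ {r : ℕ} (x : Fin (r + 1) → ℕ) (c : ℤ) :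
    S x c = ∑ j ∈ range (x 0 + 1), S (Fin.tail x) (c - j) := by
  have hcons := filter_piFinset_eq_map_consEquiv (fun i => range (x i + 1)) fun _ => True
  simp only [filter_true] at hcons
  simp only [S, card_filter, hcons, sum_map, sum_product]
  refine sum_congr rfl fun j _ => sum_congr rfl fun z _ => ?_
  simp [Fin.sum_univ_succ, eq_sub_iff_add_eq, add_comm]

theorem isSymmUnimodal_S {r : ℕ} (x : Fin r → ℕ) : IsSymmUnimodal (S x) (∑ i, (x i : ℤ)) := by
  induction r with
  | zero =>
    intro a b hab
    simp only [univ_eq_empty, sum_empty, sub_zero, S_fin_zero] at hab ⊢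
    split_ifs with ha hb <;> simp_all
    linarith [abs_pos.mpr hb]
  | succ r ih =>
    rw [funext (S_fin_succ x), Fin.sum_univ_succ, add_comm (x 0 : ℤ)]
    exact (ih (Fin.tail x)).sum_range_sub (x 0)

theorem kostka_note_stmt1 {r : ℕ} (x : Fin r → ℕ) (a b : ℕ)
    (h : |(b : ℚ) - (∑ i, (x i : ℚ)) / 2| ≤ |(a : ℚ) - (∑ i, (x i : ℚ)) / 2|) :
    S x (a : ℤ) ≤ S x (b : ℤ) := by
  refine isSymmUnimodal_S x a b ?_
  have double : ∀ t : ℚ, |2 * t - ∑ i, (x i : ℚ)| = 2 * |t - (∑ i, (x i : ℚ)) / 2| := fun t => by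
    rw [← abs_two, ← abs_mul]
    ring_nf
  qify
  rw [double, double]
  linarith
end

section
/- Let x_1, ..., x_r be non-negative integers and let S(x_1,...,x_r; c) denote the number of tuples (y_1,...,y_r) of integers with 0 ≤ y_i ≤ x_i and y_1+...+y_r = c. If a, b are integers with a ≤ b ≤ (x_1+...+x_r)/2, then S(x_1,...,x_r; a) ≤ S(x_1,...,x_r; b). -/
/-- `Good m f` : `f` is symmetric about `m/2` and nondecreasing up to `m/2`. -/
def Good (m : ℤ) (f : ℤ → ℕ) : Prop :=
  (∀ c, f (m - c) = f c) ∧ (∀ a b : ℤ, a ≤ b → 2 * b ≤ m → f a ≤ f b)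

lemma good_conv {m : ℤ} {f : ℤ → ℕ} (hf : Good m f) (n : ℕ) :
    Good (m + n) (fun c => ∑ j ∈ Finset.range (n + 1), f (c - j)) := by
  obtain ⟨hsym, hmono⟩ := hf
  constructor
  · intro c
    calc ∑ j ∈ Finset.range (n + 1), f (m + n - c - j)
        = ∑ j ∈ Finset.range (n + 1), f (c - (n - j : ℕ)) := by
          apply Finset.sum_congr rfl
          intro j hj
          rw [Finset.mem_range] at hj
          have hjn : j ≤ n := Nat.lt_succ_iff.mp hj
          have : (m + n - c - j) = m - (c - (n - j : ℕ)) := by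
            have : ((n - j : ℕ) : ℤ) = (n : ℤ) - j := by
              exact_mod_cast Int.ofNat_sub hjn
            rw [this]; ring
          rw [this, hsym]
      _ = ∑ j ∈ Finset.range (n + 1), f (c - j) := by
          have := Finset.sum_range_reflect (fun j => f (c - j)) (n + 1)
          simpa using this
  · intro a b hab hb
    -- step lemma
    have step : ∀ c : ℤ, 2 * (c + 1) ≤ m + n →
        (∑ j ∈ Finset.range (n + 1), f (c - j)) ≤
        (∑ j ∈ Finset.range (n + 1), f (c + 1 - j)) := by
      intro c hc
      have key : (∑ j ∈ Finset.range (n + 1), f (c + 1 - j)) + f (c - n)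
          = (∑ j ∈ Finset.range (n + 1), f (c - j)) + f (c + 1) := by
        rw [Finset.sum_range_succ' (fun j => f (c + 1 - j)) n,
            Finset.sum_range_succ (fun j => f (c - j)) n]
        have : ∀ j : ℕ, c + 1 - ((j : ℤ) + 1) = c - j := by intro j; ring
        push_cast
        simp only [this]
        ring
      have hle : f (c - n) ≤ f (c + 1) := by
        by_cases h2 : 2 * (c + 1) ≤ m
        · exact hmono _ _ (by omega) h2
        · have := hsym (c + 1)
          rw [← this]
          exact hmono _ _ (by omega) (by omega)
      omega
    -- induction from a to b
    have main : ∀ k : ℕ, ∀ b : ℤ, 2 * b ≤ m + n →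
        (∑ j ∈ Finset.range (n + 1), f (b - k - j)) ≤
        (∑ j ∈ Finset.range (n + 1), f (b - j)) := by
      intro k
      induction k with
      | zero => intro b _; simp
      | succ k ih =>
        intro b hb2
        have h1 := ih (b - 1) (by omega)
        have h2 := step (b - 1) (by omega)
        have e : b - 1 + 1 = b := by ring
        rw [e] at h2
        calc (∑ j ∈ Finset.range (n + 1), f (b - (k + 1 : ℕ) - j))
            = (∑ j ∈ Finset.range (n + 1), f (b - 1 - k - j)) := by
              apply Finset.sum_congr rfl; intro j _; congr 1; push_cast; ring
          _ ≤ (∑ j ∈ Finset.range (n + 1), f (b - 1 - j)) := h1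
          _ ≤ (∑ j ∈ Finset.range (n + 1), f (b - j)) := h2
    have hk : a = b - ((b - a).toNat : ℤ) := by omega
    rw [hk]
    exact main (b - a).toNat b hb

lemma S_succ {r : ℕ} (x : Fin (r + 1) → ℕ) (c : ℤ) :
    S x c = ∑ j ∈ Finset.range (x 0 + 1), S (Fin.tail x) (c - j) := by
  unfold S
  rw [Finset.card_eq_sum_card_fiberwise (f := fun y => y 0)
    (t := Finset.range (x 0 + 1)) (by
      intro y hy
      rw [Finset.mem_coe, Finset.mem_filter, Fintype.mem_piFinset] at hy
      exact hy.1 0)]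
  apply Finset.sum_congr rfl
  intro j hj
  rw [Finset.mem_range] at hj
  apply Finset.card_bij' (fun y _ => Fin.tail y) (fun z _ => Fin.cons j z)
  · intro y hy
    simp only [Finset.mem_filter, Fintype.mem_piFinset, Finset.mem_range] at hy ⊢
    obtain ⟨h1, h2⟩ := hy
    refine ⟨⟨?_, ?_⟩, by simp⟩
    · intro a
      refine Fin.cases ?_ ?_ a
      · simpa using hj
      · intro k; simpa [Fin.tail] using h1 k
    · rw [Fin.sum_univ_succ]
      simp only [Fin.cons_zero, Fin.cons_succ]
      omega
  · intro z hz
    simp only [Finset.mem_filter, Fintype.mem_piFinset, Finset.mem_range] at hz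
    rw [← hz.2]
    exact Fin.cons_self_tail z
  · intro a _
    funext i; simp [Fin.tail, Fin.cons]
  · intro y hy
    simp only [Finset.mem_filter, Fintype.mem_piFinset, Finset.mem_range] at hy ⊢
    obtain ⟨⟨h1, h2⟩, h0⟩ := hy
    refine ⟨fun i => h1 i.succ, ?_⟩
    rw [Fin.sum_univ_succ, h0] at h2
    rw [show ∑ i : Fin r, ((Fin.tail y i : ℕ) : ℤ) = ∑ i : Fin r, (y i.succ : ℤ) from rfl]
    omega

lemma good_S : ∀ (r : ℕ) (x : Fin r → ℕ), Good (∑ i, (x i : ℤ)) (S x) := by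
  intro r
  induction r with
  | zero =>
    intro x
    have hS : ∀ c : ℤ, S x c = if c = 0 then 1 else 0 := by
      intro c
      unfold S
      simp only [Finset.sum_empty, Fin.sum_univ_zero]
      by_cases hc : c = 0
      · subst hc
        rw [if_pos rfl]
        simp
      · rw [if_neg hc]
        simp [Ne.symm hc]
    constructor
    · intro c
      simp only [Fin.sum_univ_zero, hS]
      simp [neg_eq_zero]
    · intro a b hab hb
      simp only [Fin.sum_univ_zero] at hb
      rw [hS, hS]
      by_cases hbz : b = 0
      · simp only [hbz, if_pos rfl]
        split_ifs <;> simp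
      · have : a ≠ 0 := by omega
        simp [this, hbz]
  | succ r ih =>
    intro x
    have h := good_conv (ih (Fin.tail x)) (x 0)
    have hm : ∑ i : Fin (r + 1), (x i : ℤ) = (∑ i : Fin r, (Fin.tail x i : ℤ)) + (x 0 : ℤ) := by
      rw [Fin.sum_univ_succ]; ring_nf; rfl
    rw [hm]
    have hfun : S x = fun c => ∑ j ∈ Finset.range (x 0 + 1), S (Fin.tail x) (c - j) := by
      funext c; exact S_succ x c
    rw [hfun]
    exact h

theorem kostka_note_stmt2 {r : ℕ} (x : Fin r → ℕ) (a b : ℤ)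
    (hab : a ≤ b) (hb : (b : ℚ) ≤ (∑ i, (x i : ℚ)) / 2) :
    S x a ≤ S x b := by
  have hgood := good_S r x
  apply hgood.2 a b hab
  have hm : ((∑ i, (x i : ℤ) : ℤ) : ℚ) = ∑ i, (x i : ℚ) := by push_cast; rfl
  have : (2 * b : ℚ) ≤ ((∑ i, (x i : ℤ) : ℤ) : ℚ) := by
    rw [hm]; linarith
  exact_mod_cast this
end

section
/- Let λ be a partition of n and μ a composition of n, and fix i ∈ ℕ with μ_i > μ_{i+1}. Define the composition ν by ν_i = μ_i - 1, ν_{i+1} = μ_{i+1} + 1, and ν_j = μ_j for all j ≠ i, i+1. Then the Kostka number K_{λμ} ≤ K_{λν}, i.e., the number of semistandard λ-tableaux of content μ is at most the number of semistandard λ-tableaux of content ν. -/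
/-- A composition of `n`: a finitely-supported sequence of naturals summing to `n`. -/
def IsComposition (n : ℕ) (μ : ℕ → ℕ) : Prop :=
  (Function.support μ).Finite ∧ ∑ᶠ i, μ i = n

/-- A partition of `n`: a weakly decreasing composition of `n`. -/
def IsPartition (n : ℕ) (μ : ℕ → ℕ) : Prop :=
  Antitone μ ∧ IsComposition n μ

/-- `μ` dominates `ν`: every partial sum of `μ` is at least that of `ν`. -/
def Dominates (μ ν : ℕ → ℕ) : Prop :=
  ∀ r, ∑ i ∈ Finset.range r, ν i ≤ ∑ i ∈ Finset.range r, μ i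

/-- `T` is a semistandard tableau of shape `p` (0-indexed rows/columns/entries):
rows weakly increase, columns strictly increase, and `T` is zero outside the diagram. -/
def IsSSYT (p : ℕ → ℕ) (T : ℕ → ℕ → ℕ) : Prop :=
  (∀ r c₁ c₂, c₁ ≤ c₂ → c₂ < p r → T r c₁ ≤ T r c₂) ∧
  (∀ r₁ r₂ c, r₁ < r₂ → c < p r₂ → T r₁ c < T r₂ c) ∧
  (∀ r c, p r ≤ c → T r c = 0)

/-- The number of entries of `T` equal to `i` within the diagram of `p`. -/
noncomputable def contentOf (p : ℕ → ℕ) (T : ℕ → ℕ → ℕ) (i : ℕ) : ℕ :=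
  {q : ℕ × ℕ | q.2 < p q.1 ∧ T q.1 q.2 = i}.ncard

/-- The Kostka number: the number of semistandard tableaux of shape `p` and content `μ`. -/
noncomputable def Kostka (p μ : ℕ → ℕ) : ℕ :=
  {T : ℕ → ℕ → ℕ | IsSSYT p T ∧ ∀ i, contentOf p T i = μ i}.ncard

/-!
Read a tableau row by row, from the bottom row up and each row from left to right, recording
every entry `i + 1` as `+1` and every entry `i` as `-1`. As `μ i > μ (i + 1)`, the partial sums
(heights) of this word end negative. Change into `i + 1` the entry `i` read at the step where the
height first reaches its minimum: this is the rightmost `i` not paired with an earlier `i + 1`.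
The result is again semistandard: an `i` right after it would push the height lower still, and
an `i + 1` below it would pair off, column by column, the run of `i`'s ending at it. The new
tableau has content `ν`, and the change is undone by locating the leftmost unpaired `i + 1` of
its word, so this is an injection from tableaux of content `μ` into tableaux of content `ν`.
-/

open Finset

namespace Kostka

section Word

def height (w : ℕ → ℤ) (k : ℕ) : ℤ := ∑ j ∈ range k, w j

def IsFirstMinStep (w : ℕ → ℤ) (N K : ℕ) : Prop :=
  K < N ∧ (∀ t ≤ N, height w (K + 1) ≤ height w t) ∧
    ∀ t ≤ K, height w (K + 1) < height w t

noncomputable def firstMinStep (w : ℕ → ℤ) (N : ℕ) : ℕ := sInf {K | IsFirstMinStep w N K}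

def IsUnmatchedOpen (w : ℕ → ℤ) (N j : ℕ) : Prop :=
  w j = 1 ∧ ∀ t, j + 1 ≤ t → t ≤ N → height w (j + 1) ≤ height w t

variable {w : ℕ → ℤ}

@[simp] lemma height_zero : height w 0 = 0 := sum_range_zero w

lemma height_succ (k : ℕ) : height w (k + 1) = height w k + w k := sum_range_succ w k

lemma height_sub_height {a b : ℕ} (hab : a ≤ b) :
    height w b - height w a = ∑ j ∈ Ico a b, w j :=
  (sum_Ico_eq_sub w hab).symm

lemma height_add_of_eqOn {a L : ℕ} {e : ℤ} (he : ∀ j, a ≤ j → j < a + L → w j = e) :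
    height w (a + L) = height w a + L * e := by
  rw [← sub_eq_iff_eq_add', height_sub_height (Nat.le_add_right a L),
    sum_congr rfl fun j hj => he j (mem_Ico.1 hj).1 (mem_Ico.1 hj).2, sum_const, Nat.card_Ico,
    Nat.add_sub_cancel_left, nsmul_eq_mul]

lemma height_le_of_nonneg {a b : ℕ} (hab : a ≤ b)
    (hw : ∀ j, a ≤ j → j < b → 0 ≤ w j) :
    height w a ≤ height w b := by
  rw [← sub_nonneg, height_sub_height hab]
  exact sum_nonneg fun j hj => hw j (mem_Ico.1 hj).1 (mem_Ico.1 hj).2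

lemma height_update (K : ℕ) (v : ℤ) (t : ℕ) :
    height (Function.update w K v) t = height w t + if K < t then v - w K else 0 := by
  induction t with
  | zero => simp
  | succ t ih =>
    rw [height_succ, height_succ, ih, Function.update_apply]
    split_ifs <;> subst_vars <;> omega

lemma exists_isFirstMinStep {N : ℕ} (hN : height w N < 0) : ∃ K, IsFirstMinStep w N K := by
  obtain ⟨t₀, ht₀, hmin⟩ := exists_min_image (range (N + 1)) (height w) ⟨0, by simp⟩
  have hex : ∃ t, t ≤ N ∧ ∀ t' ≤ N, height w t ≤ height w t' :=
    ⟨t₀, by simpa [Nat.lt_succ_iff] using ht₀,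
      fun t' ht' => hmin t' (mem_range.2 (Nat.lt_succ_of_le ht'))⟩
  obtain ⟨hleN, hmin⟩ := Nat.find_spec hex
  have hpos : Nat.find hex ≠ 0 := by
    intro h
    have := hmin N le_rfl
    rw [h, height_zero] at this
    omega
  obtain ⟨K, hK⟩ := Nat.exists_eq_succ_of_ne_zero hpos
  rw [hK] at hleN hmin
  refine ⟨K, hleN, hmin, fun t ht => ?_⟩
  have hnot := Nat.find_min hex (show t < Nat.find hex by omega)
  push Not at hnot
  obtain ⟨t', ht'N, ht'⟩ := hnot (by omega)
  exact (hmin t' ht'N).trans_lt ht'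

lemma isFirstMinStep_firstMinStep {N : ℕ} (hN : height w N < 0) :
    IsFirstMinStep w N (firstMinStep w N) :=
  Nat.sInf_mem (exists_isFirstMinStep hN)

lemma IsFirstMinStep.apply_neg {N K : ℕ} (h : IsFirstMinStep w N K) : w K < 0 := by
  have := h.2.2 K le_rfl
  rw [height_succ] at this
  omega

lemma IsFirstMinStep.apply_eq_neg_one {N K : ℕ} (h : IsFirstMinStep w N K) (hw : -1 ≤ w K) :
    w K = -1 :=
  le_antisymm (Int.le_sub_one_of_lt h.apply_neg) hw

lemma IsFirstMinStep.isLeast_update {N K : ℕ} (h : IsFirstMinStep w N K) (hK : w K = -1) :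
    IsLeast {j | IsUnmatchedOpen (Function.update w K 1) N j} K := by
  obtain ⟨hKN, hmin, hfirst⟩ := h
  refine ⟨⟨by simp, fun t ht htN => ?_⟩, fun j ⟨hj, hjmin⟩ => ?_⟩
  · rw [height_update, height_update, if_pos (by omega), if_pos (by omega)]
    linarith [hmin t htN]
  · -- An earlier `+1` ends at least `2` above the minimum, while `K` starts only `1` above it.
    by_contra hjK
    push Not at hjK
    have hwj : w j = 1 := by rwa [Function.update_of_ne hjK.ne] at hj
    have := hjmin K (by omega) hKN.le
    rw [height_update, height_update, if_neg (by omega), if_neg (lt_irrefl K), height_succ,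
      hwj] at this
    have := hfirst j hjK.le
    have := height_succ (w := w) K
    omega

end Word

section ReadingOrder

variable (m M : ℕ)

/-- Position `k` of the reading word of a shape with at most `m` rows, each shorter than `M`:
rows `m - 1, …, 1, 0` are read in turn, each padded to length `M`. -/
def cell (k : ℕ) : ℕ × ℕ := (m - 1 - k / M, k % M)

def pos (q : ℕ × ℕ) : ℕ := (m - 1 - q.1) * M + q.2

variable {m M}

lemma pos_row (r t : ℕ) : pos m M (r, t) = pos m M (r, 0) + t := by simp [pos]

lemma pos_succ_row {r : ℕ} (hr : r + 1 < m) : pos m M (r, 0) = pos m M (r + 1, 0) + M := by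
  simp only [pos, add_zero]
  rw [show m - 1 - r = m - 1 - (r + 1) + 1 by omega, add_one_mul]

lemma pos_lt {q : ℕ × ℕ} (hr : q.1 < m) (hc : q.2 < M) : pos m M q < m * M :=
  calc pos m M q < (m - 1 - q.1) * M + M := by simp only [pos]; omega
    _ = (m - 1 - q.1 + 1) * M := (add_one_mul _ _).symm
    _ ≤ m * M := Nat.mul_le_mul_right _ (by omega)

lemma cell_pos {q : ℕ × ℕ} (hr : q.1 < m) (hc : q.2 < M) : cell m M (pos m M q) = q := by
  have hM : 0 < M := by omega
  have hdiv : pos m M q / M = m - 1 - q.1 := by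
    rw [pos, Nat.mul_comm, Nat.mul_add_div hM, Nat.div_eq_of_lt hc, add_zero]
  have hmod : pos m M q % M = q.2 := by
    rw [pos, Nat.mul_add_mod_self_right, Nat.mod_eq_of_lt hc]
  ext
  · simp only [cell, hdiv]; omega
  · simp only [cell, hmod]

lemma cell_fst_lt {k : ℕ} (hk : k < m * M) : (cell m M k).1 < m := by
  have : 0 < m := Nat.pos_of_ne_zero (by rintro rfl; simp at hk)
  show m - 1 - k / M < m
  generalize k / M = d
  omega

lemma pos_cell {k : ℕ} (hk : k < m * M) : pos m M (cell m M k) = k := by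
  have : k / M < m := Nat.div_lt_of_lt_mul (by rwa [Nat.mul_comm] at hk)
  show (m - 1 - (m - 1 - k / M)) * M + k % M = k
  rw [show m - 1 - (m - 1 - k / M) = k / M by generalize k / M = d at *; omega, Nat.div_add_mod']

end ReadingOrder

section ReadingWord

def bracket (i v : ℕ) : ℤ := if v = i + 1 then 1 else if v = i then -1 else 0

lemma bracket_eq_sub (i v : ℕ) :
    bracket i v = (if v = i + 1 then 1 else 0) - if v = i then 1 else 0 := by
  unfold bracket; split_ifs <;> omega

lemma neg_one_le_bracket (i v : ℕ) : -1 ≤ bracket i v := by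
  unfold bracket; split_ifs <;> omega

lemma bracket_nonneg {i v : ℕ} (h : v ≠ i) : 0 ≤ bracket i v := by
  unfold bracket; split_ifs <;> omega

-- The guard `k < m * M` matters: beyond it, truncated subtraction sends `cell` back to row `0`.
def readingWord (i m M : ℕ) (lam : ℕ → ℕ) (T : ℕ → ℕ → ℕ) (k : ℕ) : ℤ :=
  if k < m * M ∧ (cell m M k).2 < lam (cell m M k).1 then
    bracket i (T (cell m M k).1 (cell m M k).2)
  else 0

variable {i m M : ℕ} {lam : ℕ → ℕ} {T : ℕ → ℕ → ℕ}

lemma readingWord_pos {r t : ℕ} (hr : r < m) (ht : t < M) :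
    readingWord i m M lam T (pos m M (r, t)) = if t < lam r then bracket i (T r t) else 0 := by
  have hq := cell_pos (m := m) (M := M) (q := (r, t)) hr ht
  simp only [readingWord, hq, pos_lt (q := (r, t)) hr ht, true_and]

lemma neg_one_le_readingWord (k : ℕ) : -1 ≤ readingWord i m M lam T k := by
  unfold readingWord; split_ifs
  exacts [neg_one_le_bracket _ _, by omega]

lemma readingWord_neg {k : ℕ} (hk : readingWord i m M lam T k < 0) :
    k < m * M ∧ (cell m M k).2 < lam (cell m M k).1 ∧ T (cell m M k).1 (cell m M k).2 = i := by
  unfold readingWord at hk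
  split_ifs at hk with h
  · refine ⟨h.1, h.2, ?_⟩
    unfold bracket at hk
    split_ifs at hk with h₁ h₂ <;> omega
  · omega

lemma lt_of_lt_shape (hm : ∀ r, m ≤ r → lam r = 0) {r c : ℕ} (hc : c < lam r) : r < m := by
  by_contra h
  have := hm r (not_lt.1 h)
  omega

lemma diagram_finite (hm : ∀ r, m ≤ r → lam r = 0) (hM : ∀ r, lam r < M) :
    {p : ℕ × ℕ | p.2 < lam p.1}.Finite :=
  ((Set.finite_Iio m).prod (Set.finite_Iio M)).subset fun _ hp =>
    ⟨lt_of_lt_shape hm hp, hp.trans (hM _)⟩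

lemma contentOf_eq_card (hD : {p : ℕ × ℕ | p.2 < lam p.1}.Finite) (u : ℕ) :
    contentOf lam T u = #{p ∈ hD.toFinset | T p.1 p.2 = u} := by
  rw [contentOf, ← Set.ncard_coe_finset]
  congr 1
  ext p
  simp

lemma height_readingWord (hm : ∀ r, m ≤ r → lam r = 0) (hM : ∀ r, lam r < M) :
    height (readingWord i m M lam T) (m * M) =
      contentOf lam T (i + 1) - (contentOf lam T i : ℤ) := by
  have hD := diagram_finite hm hM
  have hsum : height (readingWord i m M lam T) (m * M) =
      ∑ p ∈ hD.toFinset, bracket i (T p.1 p.2) := by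
    rw [height, ← sum_filter_add_sum_filter_not _ (fun k => (cell m M k).2 < lam (cell m M k).1),
      sum_eq_zero (s := filter (fun k => ¬ _) _) fun k hk => by
      simp only [mem_filter, mem_range] at hk; simp [readingWord, hk.2], add_zero]
    refine sum_nbij' (cell m M) (pos m M) (fun k hk => ?_) (fun p hp => ?_) (fun k hk => ?_)
      (fun p hp => ?_) (fun k hk => ?_)
    · simp only [mem_filter, mem_range] at hk
      simpa using hk.2
    · simp only [Set.Finite.mem_toFinset, Set.mem_ofPred_eq] at hp
      have hr := lt_of_lt_shape hm hp
      simp only [mem_filter, mem_range, cell_pos hr (hp.trans (hM _))]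
      exact ⟨pos_lt hr (hp.trans (hM _)), hp⟩
    · exact pos_cell (mem_range.1 (mem_filter.1 hk).1)
    · have hp : p.2 < lam p.1 := by simpa using hp
      exact cell_pos (lt_of_lt_shape hm hp) (hp.trans (hM _))
    · simp only [mem_filter, mem_range] at hk
      simp [readingWord, hk]
  rw [hsum, contentOf_eq_card hD, contentOf_eq_card hD]
  simp only [bracket_eq_sub, sum_sub_distrib, sum_boole]

end ReadingWord

section SetCell

variable {lam : ℕ → ℕ} {T : ℕ → ℕ → ℕ}

def setCell (T : ℕ → ℕ → ℕ) (q : ℕ × ℕ) (v : ℕ) : ℕ → ℕ → ℕ :=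
  fun r c => if (r, c) = q then v else T r c

lemma setCell_of_ne {q p : ℕ × ℕ} (v : ℕ) (h : p ≠ q) :
    setCell T q v p.1 p.2 = T p.1 p.2 :=
  if_neg h

@[simp] lemma setCell_self (q : ℕ × ℕ) (v : ℕ) : setCell T q v q.1 q.2 = v := if_pos rfl

lemma eq_of_setCell_eq {T' : ℕ → ℕ → ℕ} {q : ℕ × ℕ} {v : ℕ}
    (h : setCell T q v = setCell T' q v) (hq : T q.1 q.2 = T' q.1 q.2) : T = T' := by
  funext r c
  by_cases hrc : (r, c) = q
  · subst hrc; exact hq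
  · simpa [setCell, hrc] using congrFun (congrFun h r) c

lemma contentOf_setCell_add (hD : {p : ℕ × ℕ | p.2 < lam p.1}.Finite) {q : ℕ × ℕ}
    (hq : q.2 < lam q.1) (v u : ℕ) :
    contentOf lam (setCell T q v) u + (if T q.1 q.2 = u then 1 else 0) =
      contentOf lam T u + if v = u then 1 else 0 := by
  have hqD : q ∈ hD.toFinset := by simpa using hq
  simp only [contentOf_eq_card hD, card_filter, ← add_sum_erase _ _ hqD]
  have hrest : ∑ p ∈ hD.toFinset.erase q, (if setCell T q v p.1 p.2 = u then 1 else 0) =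
      ∑ p ∈ hD.toFinset.erase q, if T p.1 p.2 = u then 1 else 0 :=
    sum_congr rfl fun p hp => by rw [setCell_of_ne v (ne_of_mem_erase hp)]
  rw [hrest, setCell_self]
  ring

lemma _root_.IsSSYT.setCell (hlam : Antitone lam) (hT : IsSSYT lam T) {r c v : ℕ} (hc : c < lam r)
    (hle : T r c ≤ v) (hright : c + 1 < lam r → v ≤ T r (c + 1))
    (hbelow : c < lam (r + 1) → v < T (r + 1) c) : IsSSYT lam (setCell T (r, c) v) := by
  obtain ⟨hrow, hcol, hzero⟩ := hT
  refine ⟨fun r' c₁ c₂ h₁₂ h₂ => ?_, fun r₁ r₂ c' h₁₂ h₂ => ?_,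
    fun r' c' h => ?_⟩
  · simp only [Kostka.setCell, Prod.mk.injEq]
    split_ifs with h₁ h₂' h₃
    · exact le_rfl
    · obtain ⟨rfl, rfl⟩ := h₁
      exact (hright (by omega)).trans (hrow _ _ _ (by omega) h₂)
    · obtain ⟨rfl, rfl⟩ := h₃
      exact (hrow _ _ _ h₁₂ h₂).trans hle
    · exact hrow _ _ _ h₁₂ h₂
  · simp only [Kostka.setCell, Prod.mk.injEq]
    split_ifs with h₁ h₂' h₃
    · omega
    · obtain ⟨rfl, rfl⟩ := h₁
      have hbelow := hbelow (h₂.trans_le (hlam h₁₂))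
      rcases (Nat.succ_le_of_lt h₁₂).eq_or_lt with h | h
      · exact h ▸ hbelow
      · exact hbelow.trans (hcol _ _ _ h h₂)
    · obtain ⟨rfl, rfl⟩ := h₃
      exact (hcol _ _ _ h₁₂ h₂).trans_le hle
    · exact hcol _ _ _ h₁₂ h₂
  · rw [Kostka.setCell, if_neg (by rintro ⟨⟩; omega)]
    exact hzero _ _ h

end SetCell

section Lowering

variable {i m M : ℕ} {lam : ℕ → ℕ} {T : ℕ → ℕ → ℕ} {K r c : ℕ}

lemma IsFirstMinStep.cell_mem (hK : IsFirstMinStep (readingWord i m M lam T) (m * M) K) :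
    (cell m M K).2 < lam (cell m M K).1 ∧ T (cell m M K).1 (cell m M K).2 = i :=
  (readingWord_neg hK.apply_neg).2

lemma IsFirstMinStep.ne_right (hM : ∀ r, lam r < M)
    (hK : IsFirstMinStep (readingWord i m M lam T) (m * M) K) (hcell : cell m M K = (r, c))
    (hc : c + 1 < lam r) : T r (c + 1) ≠ i := by
  intro hTi
  have hr : r < m := by simpa [hcell] using cell_fst_lt hK.1
  have hcM : c + 1 < M := hc.trans (hM r)
  have hpos : pos m M (r, c + 1) = K + 1 := by
    rw [← pos_cell hK.1, hcell, pos_row, pos_row r c, add_assoc]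
  have hw : readingWord i m M lam T (K + 1) = -1 := by
    rw [← hpos, readingWord_pos hr hcM, if_pos hc, hTi, bracket]
    simp
  have := hK.2.1 (K + 1 + 1) (hpos ▸ pos_lt (q := (r, c + 1)) hr hcM)
  rw [height_succ (K + 1), hw] at this
  omega

/-- The `+1`'s read in columns `c₀, …, c` of row `r + 1` cancel the `-1`'s read in the same
columns of row `r`, and every letter read in between is nonnegative. -/
lemma height_readingWord_le_of_pairing {r c₀ c : ℕ} (hr : r + 1 < m) (hcM : c < M)
    (hc₀ : c₀ ≤ c) (hbelow : ∀ t, c₀ ≤ t → t ≤ c → t < lam (r + 1) ∧ T (r + 1) t = i + 1)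
    (habove : ∀ t, c₀ ≤ t → t ≤ c → t < lam r ∧ T r t = i)
    (hright : ∀ t, c < t → t < lam (r + 1) → T (r + 1) t ≠ i) (hleft : ∀ t < c₀, T r t ≠ i) :
    height (readingWord i m M lam T) (pos m M (r + 1, c₀)) ≤
      height (readingWord i m M lam T) (pos m M (r, c) + 1) := by
  set w := readingWord i m M lam T
  set base := pos m M (r + 1, 0)
  have hw₁ {t : ℕ} (ht : t < M) :
      w (base + t) = if t < lam (r + 1) then bracket i (T (r + 1) t) else 0 := by
    rw [← pos_row]
    exact readingWord_pos hr ht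
  have hw₀ {t : ℕ} (ht : t < M) :
      w (base + M + t) = if t < lam r then bracket i (T r t) else 0 := by
    rw [← pos_succ_row hr, ← pos_row]
    exact readingWord_pos (by omega) ht
  have hup := height_add_of_eqOn (w := w) (a := base + c₀) (L := c + 1 - c₀) (e := 1)
    fun j hj₁ hj₂ => by
      obtain ⟨t, rfl⟩ : ∃ t, j = base + t := ⟨j - base, by omega⟩
      obtain ⟨ht, hTt⟩ := hbelow t (by omega) (by omega)
      rw [hw₁ (by omega), if_pos ht, hTt]
      simp [bracket]
  have hgap : height w (base + c₀ + (c + 1 - c₀)) ≤ height w (base + M + c₀) :=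
    height_le_of_nonneg (by omega) fun j hj₁ hj₂ => by
      by_cases hj : j < base + M
      · obtain ⟨t, rfl⟩ : ∃ t, j = base + t := ⟨j - base, by omega⟩
        rw [hw₁ (by omega)]
        split_ifs with ht
        exacts [bracket_nonneg (hright t (by omega) ht), le_rfl]
      · obtain ⟨t, rfl⟩ : ∃ t, j = base + M + t := ⟨j - (base + M), by omega⟩
        rw [hw₀ (by omega)]
        split_ifs
        exacts [bracket_nonneg (hleft t (by omega)), le_rfl]
  have hdown := height_add_of_eqOn (w := w) (a := base + M + c₀) (L := c + 1 - c₀) (e := -1)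
    fun j hj₁ hj₂ => by
      obtain ⟨t, rfl⟩ : ∃ t, j = base + M + t := ⟨j - (base + M), by omega⟩
      obtain ⟨ht, hTt⟩ := habove t (by omega) (by omega)
      rw [hw₀ (by omega), if_pos ht, hTt]
      simp [bracket]
  rw [pos_row, pos_row r c, pos_succ_row hr,
    show base + M + c + 1 = base + M + c₀ + (c + 1 - c₀) by omega]
  linarith

lemma IsFirstMinStep.ne_below (hT : IsSSYT lam T) (hm : ∀ r, m ≤ r → lam r = 0)
    (hM : ∀ r, lam r < M) (hK : IsFirstMinStep (readingWord i m M lam T) (m * M) K)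
    (hcell : cell m M K = (r, c)) (hc : c < lam (r + 1)) : T (r + 1) c ≠ i + 1 := by
  intro hTi
  have hr : r + 1 < m := lt_of_lt_shape hm hc
  obtain ⟨hcr, hTrc⟩ : c < lam r ∧ T r c = i := by simpa [hcell] using hK.cell_mem
  have hex : ∃ t, T r t = i := ⟨c, hTrc⟩
  have hc₀ : Nat.find hex ≤ c := Nat.find_min' hex hTrc
  have hTrc₀ : T r (Nat.find hex) = i := Nat.find_spec hex
  have hrun (t : ℕ) (h₀ : Nat.find hex ≤ t) (h : t ≤ c) :
      (t < lam (r + 1) ∧ T (r + 1) t = i + 1) ∧ t < lam r ∧ T r t = i := by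
    have h₁ := hT.1 r (Nat.find hex) t h₀ (by omega)
    have h₂ := hT.1 r t c h hcr
    have h₃ := hT.2.1 r (r + 1) t (by omega) (by omega)
    have h₄ := hT.1 (r + 1) t c h hc
    omega
  have hle := height_readingWord_le_of_pairing hr (hcr.trans (hM r)) hc₀
    (fun t h₀ h => (hrun t h₀ h).1) (fun t h₀ h => (hrun t h₀ h).2)
    (fun t h ht => by have := hT.1 (r + 1) c t h.le ht; omega) (fun t => Nat.find_min hex)
  have hlt := hK.2.2 (pos m M (r + 1, Nat.find hex))
    (by rw [← pos_cell hK.1, hcell, pos_row, pos_row r c, pos_succ_row hr]; omega)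
  rw [← hcell, pos_cell hK.1] at hle
  exact hlt.not_ge hle

lemma IsFirstMinStep.isSSYT_setCell (hlam : Antitone lam) (hT : IsSSYT lam T)
    (hm : ∀ r, m ≤ r → lam r = 0) (hM : ∀ r, lam r < M)
    (hK : IsFirstMinStep (readingWord i m M lam T) (m * M) K) :
    IsSSYT lam (setCell T (cell m M K) (i + 1)) := by
  obtain ⟨hc, hTi⟩ := hK.cell_mem
  generalize hcell : cell m M K = q at hc hTi ⊢
  obtain ⟨r, c⟩ := q
  dsimp only at hc hTi
  refine hT.setCell hlam hc (by omega) (fun h => ?_) (fun h => ?_)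
  · have := hT.1 r c (c + 1) (by omega) h
    have := hK.ne_right hM hcell h
    omega
  · have := hT.2.1 r (r + 1) c (by omega) h
    have := hK.ne_below hT hm hM hcell h
    omega

lemma readingWord_setCell (hK : K < m * M) (hc : (cell m M K).2 < lam (cell m M K).1) :
    readingWord i m M lam (setCell T (cell m M K) (i + 1)) =
      Function.update (readingWord i m M lam T) K 1 := by
  funext j
  rcases eq_or_ne j K with rfl | hj
  · simp [readingWord, hK, hc, bracket]
  · rw [Function.update_of_ne hj, readingWord, readingWord]
    split_ifs with h
    · rw [setCell_of_ne _ fun he => hj (by rw [← pos_cell h.1, he, pos_cell hK])]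
    · rfl

end Lowering

noncomputable def lowering (i m M : ℕ) (lam : ℕ → ℕ) (T : ℕ → ℕ → ℕ) :
    ℕ → ℕ → ℕ :=
  setCell T (cell m M (firstMinStep (readingWord i m M lam T) (m * M))) (i + 1)

section Injection

variable {i m M : ℕ} {lam : ℕ → ℕ} {μ ν : ℕ → ℕ}

lemma height_readingWord_neg (hm : ∀ r, m ≤ r → lam r = 0) (hM : ∀ r, lam r < M)
    (hi : μ (i + 1) < μ i) {T : ℕ → ℕ → ℕ} (hT : ∀ u, contentOf lam T u = μ u) :
    height (readingWord i m M lam T) (m * M) < 0 := by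
  rw [height_readingWord hm hM, hT, hT]
  omega

theorem mapsTo_lowering (hlam : Antitone lam) (hm : ∀ r, m ≤ r → lam r = 0)
    (hM : ∀ r, lam r < M) (hi : μ (i + 1) < μ i) (hν₁ : ν i = μ i - 1)
    (hν₂ : ν (i + 1) = μ (i + 1) + 1) (hν₃ : ∀ j, j ≠ i → j ≠ i + 1 → ν j = μ j) :
    Set.MapsTo (lowering i m M lam) {T | IsSSYT lam T ∧ ∀ u, contentOf lam T u = μ u}
      {T | IsSSYT lam T ∧ ∀ u, contentOf lam T u = ν u} := by
  rintro T ⟨hT, hμT⟩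
  have hK := isFirstMinStep_firstMinStep (height_readingWord_neg hm hM hi hμT)
  obtain ⟨hc, hTi⟩ := hK.cell_mem
  refine ⟨hK.isSSYT_setCell hlam hT hm hM, fun u => ?_⟩
  have hcount := contentOf_setCell_add (T := T) (diagram_finite hm hM) hc (i + 1) u
  rw [hTi, hμT] at hcount
  unfold lowering
  by_cases h₁ : i = u
  · subst h₁
    rw [if_pos rfl, if_neg (by omega)] at hcount
    omega
  by_cases h₂ : i + 1 = u
  · subst h₂
    rw [if_neg h₁, if_pos rfl] at hcount
    omega
  · rw [if_neg h₁, if_neg h₂, add_zero, add_zero] at hcount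
    rw [hcount, hν₃ u (Ne.symm h₁) (Ne.symm h₂)]

theorem injOn_lowering (hm : ∀ r, m ≤ r → lam r = 0) (hM : ∀ r, lam r < M)
    (hi : μ (i + 1) < μ i) :
    Set.InjOn (lowering i m M lam) {T | IsSSYT lam T ∧ ∀ u, contentOf lam T u = μ u} := by
  rintro T₁ ⟨-, hμ₁⟩ T₂ ⟨-, hμ₂⟩ he
  have hK₁ := isFirstMinStep_firstMinStep (height_readingWord_neg hm hM hi hμ₁)
  have hK₂ := isFirstMinStep_firstMinStep (height_readingWord_neg hm hM hi hμ₂)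
  have hw := congrArg (readingWord i m M lam) he
  rw [lowering, lowering, readingWord_setCell hK₁.1 hK₁.cell_mem.1,
    readingWord_setCell hK₂.1 hK₂.cell_mem.1] at hw
  have hK := (hK₁.isLeast_update (hK₁.apply_eq_neg_one (neg_one_le_readingWord _))).unique
    (hw ▸ hK₂.isLeast_update (hK₂.apply_eq_neg_one (neg_one_le_readingWord _)))
  have hTi := hK₁.cell_mem.2
  rw [lowering, lowering, hK] at he
  rw [hK] at hTi
  exact eq_of_setCell_eq he (hTi.trans hK₂.cell_mem.2.symm)

theorem finite_setOf_isSSYT (hD : {p : ℕ × ℕ | p.2 < lam p.1}.Finite)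
    (hν : (Function.support ν).Finite) :
    {T | IsSSYT lam T ∧ ∀ u, contentOf lam T u = ν u}.Finite := by
  have := hD.to_subtype
  refine Set.Finite.of_injOn (f := fun T (p : {p : ℕ × ℕ | p.2 < lam p.1}) => T p.1.1 p.1.2)
    (t := Set.univ.pi fun _ => Function.support ν) (fun T ⟨_, hT⟩ p _ => ?_) ?_
    (Set.Finite.pi fun _ => hν)
  · rw [Function.mem_support, ← hT, contentOf, ← Nat.pos_iff_ne_zero,
      Set.ncard_pos (hD.subset fun q hq => hq.1)]
    exact ⟨p.1, p.2, rfl⟩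
  · rintro T₁ ⟨h₁, -⟩ T₂ ⟨h₂, -⟩ he
    funext r c
    by_cases hc : c < lam r
    · exact congrFun he ⟨(r, c), hc⟩
    · rw [h₁.2.2 r c (not_lt.1 hc), h₂.2.2 r c (not_lt.1 hc)]

end Injection
end Kostka

theorem kostka_note_stmt3 {n : ℕ} (lam μ ν : ℕ → ℕ)
    (hlam : IsPartition n lam) (hμ : IsComposition n μ)
    (i : ℕ) (hi : μ (i + 1) < μ i)
    (hν₁ : ν i = μ i - 1) (hν₂ : ν (i + 1) = μ (i + 1) + 1)
    (hν₃ : ∀ j, j ≠ i → j ≠ i + 1 → ν j = μ j) :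
    Kostka lam μ ≤ Kostka lam ν := by
  obtain ⟨hanti, hsupp, -⟩ := hlam
  obtain ⟨b, hb⟩ := hsupp.bddAbove
  have hm : ∀ r, b + 1 ≤ r → lam r = 0 := fun r hr => by
    by_contra h
    have := hb h
    omega
  have hM : ∀ r, lam r < lam 0 + 1 := fun r => Nat.lt_succ_of_le (hanti (Nat.zero_le r))
  have hνfin : (Function.support ν).Finite :=
    (hμ.1.union (Set.toFinite {i, i + 1})).subset fun u hu => by
      by_cases h : u = i ∨ u = i + 1
      · exact Or.inr (by simpa using h)
      · push Not at h
        exact Or.inl (by rwa [Function.mem_support, ← hν₃ u h.1 h.2])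
  exact Set.ncard_le_ncard_of_injOn _ (Kostka.mapsTo_lowering hanti hm hM hi hν₁ hν₂ hν₃)
    (Kostka.injOn_lowering hm hM hi)
    (Kostka.finite_setOf_isSSYT (Kostka.diagram_finite hm hM) hνfin)
end

section
/- If λ and μ are partitions of n and there exists a semistandard λ-tableau of content μ (i.e., the Kostka number K_{λμ} > 0), then λ dominates μ: for every r, λ_1 + ... + λ_r ≥ μ_1 + ... + μ_r. -/
/-! Column strictness forces every entry in row `r` to be at least `r`. Hence the entries
`0, …, r - 1`, of which there are `μ 0 + ⋯ + μ (r - 1)`, all sit in the first `r` rows, which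
have `λ 0 + ⋯ + λ (r - 1)` cells. -/

open Finset

namespace IsSSYT

variable {p : ℕ → ℕ} {T : ℕ → ℕ → ℕ}

theorem row_le_entry (hp : Antitone p) (hT : IsSSYT p T) {r c : ℕ} (hc : c < p r) :
    r ≤ T r c := by
  induction r with
  | zero => exact Nat.zero_le _
  | succ k ih =>
    have hc_above : c < p k := hc.trans_le (hp k.le_succ)
    exact (ih hc_above).trans_lt (hT.2.1 k (k + 1) c k.lt_succ_self hc)

end IsSSYT

def topRowsCells (p : ℕ → ℕ) (r : ℕ) : Finset (ℕ × ℕ) :=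
  (range r).biUnion fun i => {i} ×ˢ range (p i)

theorem mem_topRowsCells {p : ℕ → ℕ} {r : ℕ} {q : ℕ × ℕ} :
    q ∈ topRowsCells p r ↔ q.1 < r ∧ q.2 < p q.1 := by
  simp only [topRowsCells, mem_biUnion, mem_range, mem_product, mem_singleton]
  constructor
  · rintro ⟨i, hi, rfl, hq⟩
    exact ⟨hi, hq⟩
  · rintro ⟨hr, hq⟩
    exact ⟨q.1, hr, rfl, hq⟩

theorem card_topRowsCells (p : ℕ → ℕ) (r : ℕ) :
    #(topRowsCells p r) = ∑ i ∈ range r, p i := by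
  rw [topRowsCells, card_biUnion]
  · simp
  · intro i _ j _ hij
    simp only [disjoint_left, mem_product, mem_singleton]
    rintro q ⟨rfl, -⟩ ⟨rfl, -⟩
    exact hij rfl

theorem contentOf_eq_card_filter_topRowsCells {p : ℕ → ℕ} {T : ℕ → ℕ → ℕ}
    (hp : Antitone p) (hT : IsSSYT p T) {i r : ℕ} (hi : i < r) :
    contentOf p T i = #{q ∈ topRowsCells p r | T q.1 q.2 = i} := by
  rw [contentOf, ← Set.ncard_coe_finset]
  congr 1
  ext q
  simp only [Set.mem_ofPred_eq, coe_filter, mem_topRowsCells]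
  constructor
  · rintro ⟨hq, rfl⟩
    exact ⟨⟨(hT.row_le_entry hp hq).trans_lt hi, hq⟩, rfl⟩
  · rintro ⟨⟨-, hq⟩, rfl⟩
    exact ⟨hq, rfl⟩

theorem sum_range_contentOf_le {p : ℕ → ℕ} {T : ℕ → ℕ → ℕ} (hp : Antitone p)
    (hT : IsSSYT p T) (r : ℕ) :
    ∑ i ∈ range r, contentOf p T i ≤ ∑ i ∈ range r, p i := by
  calc ∑ i ∈ range r, contentOf p T i
      = ∑ i ∈ range r, #{q ∈ topRowsCells p r | T q.1 q.2 = i} :=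
        sum_congr rfl fun i hi => contentOf_eq_card_filter_topRowsCells hp hT (mem_range.mp hi)
    _ = #{q ∈ topRowsCells p r | T q.1 q.2 ∈ range r} :=
        sum_card_fiberwise_eq_card_filter _ _ _
    _ ≤ #(topRowsCells p r) := card_filter_le _ _
    _ = ∑ i ∈ range r, p i := card_topRowsCells p r

theorem kostka_note_stmt4_general {n : ℕ} (lam μ : ℕ → ℕ)
    (hlam : IsPartition n lam)
    (h : 0 < Kostka lam μ) :
    Dominates lam μ := by
  obtain ⟨T, hT, hcontent⟩ := Set.nonempty_of_ncard_ne_zero h.ne'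
  intro r
  simpa only [hcontent] using sum_range_contentOf_le hlam.1 hT r

theorem kostka_note_stmt4 {n : ℕ} (lam μ : ℕ → ℕ)
    (hlam : IsPartition n lam) (hμ : IsPartition n μ)
    (h : 0 < Kostka lam μ) :
    Dominates lam μ :=
  kostka_note_stmt4_general lam μ hlam h
end

section
/- Suppose λ, μ, ν are partitions of n with μ dominating ν. Then the Kostka numbers satisfy K_{λμ} ≤ K_{λν}: the number of semistandard λ-tableaux of content μ is at most the number of semistandard λ-tableaux of content ν. -/
/-!
Dominance is generated by the moves that turn one entry `v` of a content `α` into `v + 1`, taken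
only where `α (v + 1) < α v`: as long as `μ ≠ ν`, some index where the partial sums of `μ` exceed
those of `ν` is also a descent of `μ`, and the move there keeps `μ` dominating `ν`.

Each such move is matched by the crystal operator `f_v` on tableaux. Read the tableau row by row
from the bottom, scoring `+1` for a `v` and `-1` for a `v + 1`; the total is `α v - α (v + 1) > 0`.
The letter read just before the first maximum of the prefix sums is a `v` whose right neighbour is
not a `v` and whose lower neighbour is not a `v + 1`, so raising it keeps the tableau semistandard.
In the new word that position is the first `-1` after which the prefix sums never exceed their value
just past it, so `f_v` is injective and the Kostka number can only grow along the move.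
-/

open Finset Function

namespace KostkaDominance

section Dominance

def moveUnit (α : ℕ → ℕ) (v : ℕ) : ℕ → ℕ :=
  fun i => if i = v then α v - 1 else if i = v + 1 then α (v + 1) + 1 else α i

variable {α ν : ℕ → ℕ}

lemma sum_range_moveUnit {v : ℕ} (hv : 0 < α v) (r : ℕ) :
    ∑ i ∈ range r, moveUnit α v i + (if r = v + 1 then 1 else 0) = ∑ i ∈ range r, α i := by
  induction r with
  | zero => simp
  | succ r ih =>
    simp only [sum_range_succ, moveUnit] at ih ⊢
    split_ifs at ih ⊢ <;> subst_vars <;> omega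

lemma eq_of_sum_range_eq (h : ∀ r, ∑ i ∈ range r, α i = ∑ i ∈ range r, ν i) : α = ν := by
  funext i
  have := h (i + 1)
  rw [sum_range_succ, sum_range_succ, h i] at this
  omega

/-- Going down from `v`, as long as `α` does not descend it stays entrywise below the antitone `ν`,
which the lead of `α` in partial sums forbids at `0`. -/
lemma exists_descent_of_lt (hν : Antitone ν) :
    ∀ v, ∑ i ∈ range (v + 1), ν i < ∑ i ∈ range (v + 1), α i → α (v + 1) < ν (v + 1) →
      ∃ u, ∑ i ∈ range (u + 1), ν i < ∑ i ∈ range (u + 1), α i ∧ α (u + 1) < α u := by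
  intro v
  induction v with
  | zero =>
    intro hsum hlt
    refine ⟨0, hsum, ?_⟩
    have := hν (Nat.zero_le 1)
    simp only [zero_add, range_one, sum_singleton] at hsum hlt ⊢
    omega
  | succ v ih =>
    intro hsum hlt
    by_cases hdesc : α (v + 1 + 1) < α (v + 1)
    · exact ⟨v + 1, hsum, hdesc⟩
    have hν' := hν (Nat.le_add_right (v + 1) 1)
    rw [sum_range_succ ν (v + 1), sum_range_succ α (v + 1)] at hsum
    exact ih (by omega) (by omega)

lemma exists_descent (hν : Antitone ν) {V : ℕ}
    (hV : ∀ r, V ≤ r → ∑ i ∈ range r, α i = ∑ i ∈ range r, ν i)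
    {v : ℕ} (hv : ∑ i ∈ range (v + 1), ν i < ∑ i ∈ range (v + 1), α i) :
    ∃ u, ∑ i ∈ range (u + 1), ν i < ∑ i ∈ range (u + 1), α i ∧ α (u + 1) < α u := by
  let P u := ∑ i ∈ range (u + 1), ν i < ∑ i ∈ range (u + 1), α i
  have hvV : v ≤ V := by
    by_contra h
    exact absurd (hV (v + 1) (by omega)) (by omega)
  set w := Nat.findGreatest P V
  have hw : P w := Nat.findGreatest_spec hvV hv
  have hw' : ¬ P (w + 1) := by
    by_cases h : w + 1 ≤ V
    · exact Nat.findGreatest_is_greatest (Nat.lt_succ_self w) h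
    · simp only [P, hV (w + 1 + 1) (by omega), lt_irrefl, not_false_eq_true]
  simp only [P, sum_range_succ _ (w + 1), not_lt] at hw hw'
  exact exists_descent_of_lt hν w hw (by omega)

/-- Dominance is generated by the moves `moveUnit α u` with `α (u + 1) < α u`: any quantity that
grows along such moves grows along dominance. -/
theorem le_of_dominates {β : Type*} [Preorder β] (f : (ℕ → ℕ) → β)
    (hf : ∀ α v, α (v + 1) < α v → f α ≤ f (moveUnit α v)) (hν : Antitone ν) (V : ℕ)
    (hdom : Dominates α ν) (hV : ∀ r, V ≤ r → ∑ i ∈ range r, α i = ∑ i ∈ range r, ν i) :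
    f α ≤ f ν := by
  induction h : ∑ r ∈ range V, ∑ i ∈ range r, α i using Nat.strong_induction_on generalizing α
    with | _ d ih =>
  by_cases hlag : ∀ v, ∑ i ∈ range (v + 1), α i ≤ ∑ i ∈ range (v + 1), ν i
  · refine le_of_eq (congrArg f (eq_of_sum_range_eq fun r => ?_))
    cases r with
    | zero => simp
    | succ r => exact le_antisymm (hlag r) (hdom (r + 1))
  push Not at hlag
  obtain ⟨v, hv⟩ := hlag
  obtain ⟨u, hu, hdesc⟩ := exists_descent hν hV hv
  have huV : u + 1 < V := by
    by_contra hc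
    exact absurd (hV (u + 1) (by omega)) (by omega)
  have hmove := sum_range_moveUnit (α := α) (v := u) (by omega)
  refine (hf α u hdesc).trans (ih _ ?_ ?_ ?_ rfl)
  · have hsplit := sum_congr rfl fun r (_ : r ∈ range V) => hmove r
    rw [sum_add_distrib, sum_ite_eq' (range V) (u + 1) (fun _ => 1),
      if_pos (mem_range.2 huV)] at hsplit
    omega
  · intro r
    have := hmove r
    have := hdom r
    by_cases hr : r = u + 1
    · subst hr
      rw [if_pos rfl] at *
      omega
    · rw [if_neg hr] at *
      omega
  · intro r hr
    have := hmove r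
    rw [if_neg (by omega), add_zero] at this
    rw [this, hV r hr]

end Dominance


section Peak

variable (s : ℕ → ℤ) (N : ℕ)

def prefixSum (m : ℕ) : ℤ := ∑ k ∈ range m, s k

def peak : ℤ := (range (N + 1)).sup' ⟨0, mem_range.2 N.succ_pos⟩ (prefixSum s)

lemma exists_prefixSum_eq_peak : ∃ m, m ≤ N ∧ prefixSum s m = peak s N := by
  obtain ⟨m, hm, h⟩ := exists_mem_eq_sup' ⟨0, mem_range.2 N.succ_pos⟩ (prefixSum s)
  exact ⟨m, Nat.lt_succ_iff.1 (mem_range.1 hm), h.symm⟩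

def firstPeak : ℕ := Nat.find (exists_prefixSum_eq_peak s N)

def lowerIndex : ℕ := firstPeak s N - 1

def IsRaisingIndex (k : ℕ) : Prop :=
  k < N ∧ s k = -1 ∧ ∀ m, k < m → m ≤ N → prefixSum s m ≤ prefixSum s (k + 1)

variable {s N}

lemma prefixSum_zero : prefixSum s 0 = 0 := sum_range_zero s

lemma prefixSum_succ (m : ℕ) : prefixSum s (m + 1) = prefixSum s m + s m := sum_range_succ s m

lemma prefixSum_update (k : ℕ) (x : ℤ) (m : ℕ) :
    prefixSum (update s k x) m = prefixSum s m + if k < m then x - s k else 0 := by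
  induction m with
  | zero => simp [prefixSum_zero]
  | succ m ih =>
    rw [prefixSum_succ, prefixSum_succ, ih, update_apply]
    split_ifs <;> subst_vars <;> omega

lemma prefixSum_le_peak {m : ℕ} (hm : m ≤ N) : prefixSum s m ≤ peak s N :=
  le_sup' (prefixSum s) (mem_range.2 (Nat.lt_succ_of_le hm))

lemma firstPeak_le : firstPeak s N ≤ N := (Nat.find_spec (exists_prefixSum_eq_peak s N)).1

lemma prefixSum_firstPeak : prefixSum s (firstPeak s N) = peak s N :=
  (Nat.find_spec (exists_prefixSum_eq_peak s N)).2

lemma prefixSum_lt_peak {m : ℕ} (hm : m < firstPeak s N) : prefixSum s m < peak s N :=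
  (prefixSum_le_peak (hm.le.trans firstPeak_le)).lt_of_ne fun h =>
    Nat.find_min (exists_prefixSum_eq_peak s N) hm ⟨(hm.le.trans firstPeak_le), h⟩

lemma apply_firstPeak_nonpos (h : firstPeak s N < N) : s (firstPeak s N) ≤ 0 := by
  have := prefixSum_le_peak (s := s) (Nat.succ_le_of_lt h)
  rw [prefixSum_succ, prefixSum_firstPeak] at this
  omega

lemma sum_Ico_firstPeak_pos {m : ℕ} (hm : m < firstPeak s N) :
    0 < ∑ k ∈ Ico m (firstPeak s N), s k := by
  rw [sum_Ico_eq_sub _ hm.le]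
  have := prefixSum_lt_peak hm
  rw [← prefixSum_firstPeak] at this
  exact sub_pos.2 this

variable (hN : 0 < prefixSum s N)
include hN

lemma lowerIndex_add_one : lowerIndex s N + 1 = firstPeak s N := by
  have hpos : firstPeak s N ≠ 0 := fun h0 => by
    have := prefixSum_le_peak (s := s) (le_refl N)
    rw [← prefixSum_firstPeak, h0, prefixSum_zero] at this
    omega
  unfold lowerIndex
  omega

lemma lowerIndex_lt : lowerIndex s N < N := by
  have := lowerIndex_add_one hN
  have := firstPeak_le (s := s) (N := N)
  omega

lemma apply_lowerIndex (hs : ∀ k, s k ≤ 1) : s (lowerIndex s N) = 1 := by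
  have hlt := prefixSum_lt_peak (Nat.lt_of_succ_le (lowerIndex_add_one hN).le)
  have hsucc := prefixSum_succ (s := s) (lowerIndex s N)
  rw [lowerIndex_add_one hN, prefixSum_firstPeak] at hsucc
  have := hs (lowerIndex s N)
  omega

/-- The position that was lowered can be read off the lowered sequence. -/
lemma isLeast_lowerIndex (hs : ∀ k, s k ≤ 1) :
    IsLeast {k | IsRaisingIndex (update s (lowerIndex s N) (-1)) N k} (lowerIndex s N) := by
  have hs₀ := apply_lowerIndex hN hs
  have hpeak : prefixSum s (lowerIndex s N + 1) = peak s N := by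
    rw [lowerIndex_add_one hN, prefixSum_firstPeak]
  rw [prefixSum_succ] at hpeak
  refine ⟨⟨lowerIndex_lt hN, update_self .., fun m hm hmN => ?_⟩, fun k ⟨_, hk, hmax⟩ => ?_⟩
  · rw [prefixSum_update, prefixSum_update, if_pos hm, if_pos (Nat.lt_succ_self _),
      prefixSum_succ]
    have := prefixSum_le_peak (s := s) hmN
    omega
  · by_contra! hlt
    rw [update_of_ne hlt.ne] at hk
    have hle := hmax _ hlt (lowerIndex_lt hN).le
    rw [prefixSum_update, prefixSum_update, if_neg (lt_irrefl _), if_neg (by omega),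
      prefixSum_succ] at hle
    have := prefixSum_lt_peak (s := s) (N := N) (m := k)
      (by rw [← lowerIndex_add_one hN]; omega)
    omega

end Peak

section ReadingOrder

variable {B : ℕ}

/-- Position of the cell `(r, c)` of the square `[0, B) × [0, B)` in the reading order: rows from
the bottom one up, each row from left to right. -/
def readKey (B r c : ℕ) : ℕ := (B - 1 - r) * B + c

def keyRow (B k : ℕ) : ℕ := B - 1 - k / B

def keyCol (B k : ℕ) : ℕ := k % B

lemma readKey_lt {r c : ℕ} (hr : r < B) (hc : c < B) : readKey B r c < B * B := by
  have : (B - 1 - r) * B + B ≤ B * B := by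
    rw [← Nat.succ_mul, mul_comm]
    exact Nat.mul_le_mul_left B (by omega)
  unfold readKey
  omega

lemma keyCol_readKey {r c : ℕ} (hc : c < B) : keyCol B (readKey B r c) = c := by
  rw [keyCol, readKey, Nat.mul_add_mod_of_lt hc]

lemma keyRow_readKey {r c : ℕ} (hr : r < B) (hc : c < B) : keyRow B (readKey B r c) = r := by
  rw [keyRow, readKey, mul_comm, Nat.mul_add_div (by omega), Nat.div_eq_of_lt hc]
  omega

lemma readKey_keyRow_keyCol {k : ℕ} (hk : k < B * B) :
    readKey B (keyRow B k) (keyCol B k) = k := by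
  have hq : k / B < B := Nat.div_lt_of_lt_mul hk
  have : B - 1 - (B - 1 - k / B) = k / B := by generalize k / B = q at hq; omega
  rw [readKey, keyRow, keyCol, this, mul_comm]
  exact Nat.div_add_mod k B

lemma keyRow_lt {k : ℕ} (hk : k < B * B) : keyRow B k < B := by
  have : 0 < B := Nat.pos_of_ne_zero (by rintro rfl; simp at hk)
  unfold keyRow
  generalize k / B = q
  omega

lemma keyCol_lt {k : ℕ} (hk : k < B * B) : keyCol B k < B :=
  Nat.mod_lt k (Nat.pos_of_ne_zero (by rintro rfl; simp at hk))

lemma readKey_add_right (r c x : ℕ) : readKey B r (c + x) = readKey B r c + x := by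
  simp only [readKey, add_assoc]

lemma readKey_succ_row {r : ℕ} (hr : r + 1 < B) (c : ℕ) :
    readKey B (r + 1) (B + c) = readKey B r c := by
  simp only [readKey, show B - 1 - r = B - 1 - (r + 1) + 1 by omega, Nat.succ_mul]
  ring

lemma sum_range_mul_keys {M : Type*} [AddCommMonoid M] (g : ℕ → ℕ → M) :
    ∑ k ∈ range (B * B), g (keyRow B k) (keyCol B k) = ∑ q ∈ range B ×ˢ range B, g q.1 q.2 := by
  refine sum_nbij' (fun k => (keyRow B k, keyCol B k)) (fun q => readKey B q.1 q.2) ?_ ?_ ?_ ?_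
    (fun _ _ => rfl)
  · intro k hk
    simp only [mem_range, mem_product] at hk ⊢
    exact ⟨keyRow_lt hk, keyCol_lt hk⟩
  · intro q hq
    simp only [mem_range, mem_product] at hq ⊢
    exact readKey_lt hq.1 hq.2
  · intro k hk
    exact readKey_keyRow_keyCol (mem_range.1 hk)
  · intro q hq
    simp only [mem_range, mem_product] at hq
    rw [keyRow_readKey hq.1 hq.2, keyCol_readKey hq.2]

end ReadingOrder

section Tableaux

variable {p : ℕ → ℕ} {T : ℕ → ℕ → ℕ}

def setCell (T : ℕ → ℕ → ℕ) (r c x : ℕ) : ℕ → ℕ → ℕ :=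
  fun r' c' => if r' = r ∧ c' = c then x else T r' c'

lemma setCell_setCell_self (r c x : ℕ) : setCell (setCell T r c x) r c (T r c) = T := by
  funext r' c'
  simp only [setCell]
  split_ifs with h <;> simp_all

lemma isSSYT_setCell_succ (hT : IsSSYT p T) (hp : Antitone p) {r c v : ℕ} (hc : c < p r)
    (hv : T r c = v) (hright : c + 1 < p r → T r (c + 1) ≠ v)
    (hbelow : c < p (r + 1) → T (r + 1) c ≠ v + 1) : IsSSYT p (setCell T r c (v + 1)) := by
  obtain ⟨hrow, hcol, hout⟩ := hT
  have hright' : ∀ c₂, c < c₂ → c₂ < p r → v + 1 ≤ T r c₂ := by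
    intro c₂ h₁ h₂
    have := hrow r c (c + 1) (by omega) (by omega)
    have := hrow r (c + 1) c₂ h₁ h₂
    have := hright (by omega)
    omega
  have hbelow' : ∀ r₂, r < r₂ → c < p r₂ → v + 1 < T r₂ c := by
    intro r₂ h₁ h₂
    have h₃ : c < p (r + 1) := h₂.trans_le (hp h₁)
    have := hcol r (r + 1) c (by omega) h₃
    have := hbelow h₃
    obtain rfl | h := eq_or_lt_of_le (show r + 1 ≤ r₂ by omega)
    · omega
    · have := hcol (r + 1) r₂ c h h₂
      omega
  refine ⟨fun r' c₁ c₂ h₁₂ h₂ => ?_, fun r₁ r₂ c' h₁₂ h₂ => ?_, fun r' c' h => ?_⟩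
  · simp only [setCell]
    split_ifs with hc₁ hc₂ hc₂
    · exact le_rfl
    · obtain ⟨rfl, rfl⟩ := hc₁
      simp only [true_and] at hc₂
      exact hright' c₂ (lt_of_le_of_ne h₁₂ (Ne.symm hc₂)) h₂
    · obtain ⟨rfl, rfl⟩ := hc₂
      have := hrow r' c₁ c₂ h₁₂ h₂
      omega
    · exact hrow r' c₁ c₂ h₁₂ h₂
  · simp only [setCell]
    split_ifs with hc₁ hc₂ hc₂
    · omega
    · obtain ⟨rfl, rfl⟩ := hc₁
      exact hbelow' r₂ h₁₂ h₂
    · obtain ⟨rfl, rfl⟩ := hc₂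
      have := hcol r₁ r₂ c' h₁₂ h₂
      omega
    · exact hcol r₁ r₂ c' h₁₂ h₂
  · rw [setCell, if_neg (by rintro ⟨rfl, rfl⟩; omega)]
    exact hout r' c' h

def cells (B : ℕ) (p : ℕ → ℕ) : Finset (ℕ × ℕ) := {q ∈ range B ×ˢ range B | q.2 < p q.1}

variable {B : ℕ} (hB : ∀ r c, c < p r → r < B ∧ c < B)
include hB

lemma mem_cells {q : ℕ × ℕ} : q ∈ cells B p ↔ q.2 < p q.1 := by
  simp only [cells, mem_filter, mem_product, mem_range, and_iff_right_iff_imp]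
  exact hB q.1 q.2

lemma contentOf_eq_card (T : ℕ → ℕ → ℕ) (i : ℕ) :
    contentOf p T i = #{q ∈ cells B p | T q.1 q.2 = i} := by
  rw [contentOf, ← Set.ncard_coe_finset]
  congr 1
  ext q
  simp [mem_cells hB]

lemma contentOf_setCell {r c : ℕ} (hc : c < p r) (x i : ℕ) :
    contentOf p (setCell T r c x) i + (if T r c = i then 1 else 0) =
      contentOf p T i + (if x = i then 1 else 0) := by
  have hmem : (r, c) ∈ cells B p := (mem_cells hB).2 hc
  rw [contentOf_eq_card hB, contentOf_eq_card hB, card_filter, card_filter,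
    ← add_sum_erase _ _ hmem, ← add_sum_erase _ _ hmem]
  have hrest : ∀ q ∈ (cells B p).erase (r, c), setCell T r c x q.1 q.2 = T q.1 q.2 := by
    rintro ⟨r', c'⟩ hq
    rw [setCell, if_neg fun h => (ne_of_mem_erase hq) (Prod.ext h.1 h.2)]
  rw [sum_congr rfl fun q hq => by rw [hrest q hq]]
  simp only [setCell, and_self, if_true]
  omega

lemma finite_setOf_content (β : ℕ → ℕ) :
    {T | IsSSYT p T ∧ ∀ i, contentOf p T i = β i}.Finite := by
  rcases Set.eq_empty_or_nonempty {T | IsSSYT p T ∧ ∀ i, contentOf p T i = β i}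
    with h | ⟨T₀, hT₀⟩
  · rw [h]
    exact Set.finite_empty
  let E := (cells B p).image fun q => T₀ q.1 q.2
  have hval : ∀ T ∈ {T | IsSSYT p T ∧ ∀ i, contentOf p T i = β i}, ∀ q ∈ cells B p,
      T q.1 q.2 ∈ E := by
    intro T hT q hq
    have hpos : 0 < contentOf p T₀ (T q.1 q.2) := by
      rw [hT₀.2, ← hT.2, contentOf_eq_card hB]
      exact card_pos.2 ⟨q, mem_filter.2 ⟨hq, rfl⟩⟩
    rw [contentOf_eq_card hB] at hpos
    obtain ⟨q', hq'⟩ := card_pos.1 hpos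
    exact mem_image.2 ⟨q', (mem_filter.1 hq').1, (mem_filter.1 hq').2⟩
  refine Set.Finite.of_finite_image (f := fun T (q : cells B p) => T q.1.1 q.1.2) ?_ ?_
  · refine (Set.Finite.pi (t := fun _ => (E : Set ℕ)) fun _ => E.finite_toSet).subset ?_
    rintro _ ⟨T, hT, rfl⟩
    exact Set.mem_univ_pi.2 fun q => hval T hT q q.2
  · intro T₁ h₁ T₂ h₂ he
    funext r c
    by_cases hrc : c < p r
    · exact congrFun he ⟨(r, c), (mem_cells hB).2 hrc⟩
    · rw [h₁.1.2.2 r c (not_lt.1 hrc), h₂.1.2.2 r c (not_lt.1 hrc)]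

end Tableaux

section Lowering

variable {B v : ℕ} {p : ℕ → ℕ} {T : ℕ → ℕ → ℕ}

def letterWeight (v y : ℕ) : ℤ := (if y = v then 1 else 0) - (if y = v + 1 then 1 else 0)

def cellWeight (v : ℕ) (p : ℕ → ℕ) (T : ℕ → ℕ → ℕ) (r c : ℕ) : ℤ :=
  if c < p r then letterWeight v (T r c) else 0

/-- The `v`-signature of the reading word of `T`: `+1` at each `v`, `-1` at each `v + 1`. -/
def weight (B v : ℕ) (p : ℕ → ℕ) (T : ℕ → ℕ → ℕ) (k : ℕ) : ℤ :=
  if k < B * B then cellWeight v p T (keyRow B k) (keyCol B k) else 0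

def lowerKey (B v : ℕ) (p : ℕ → ℕ) (T : ℕ → ℕ → ℕ) : ℕ := lowerIndex (weight B v p T) (B * B)

/-- The crystal operator `f_v`: the entry read just before the first peak of the `v`-signature
is a `v`, and it becomes `v + 1`. -/
def lower (B v : ℕ) (p : ℕ → ℕ) (T : ℕ → ℕ → ℕ) : ℕ → ℕ → ℕ :=
  setCell T (keyRow B (lowerKey B v p T))
    (keyCol B (lowerKey B v p T)) (v + 1)

lemma cellWeight_le_one (r c : ℕ) : cellWeight v p T r c ≤ 1 := by
  unfold cellWeight letterWeight
  split_ifs <;> omega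

lemma cellWeight_nonpos {r c : ℕ} (h : c < p r → T r c ≠ v) : cellWeight v p T r c ≤ 0 := by
  unfold cellWeight letterWeight
  split_ifs <;> simp_all

lemma weight_le_one (k : ℕ) : weight B v p T k ≤ 1 := by
  unfold weight
  split_ifs
  exacts [cellWeight_le_one _ _, zero_le_one]

lemma weight_readKey {r c : ℕ} (hr : r < B) (hc : c < B) :
    weight B v p T (readKey B r c) = cellWeight v p T r c := by
  rw [weight, if_pos (readKey_lt hr hc), keyRow_readKey hr hc, keyCol_readKey hc]

lemma weight_eq_one {k : ℕ} (h : weight B v p T k = 1) :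
    k < B * B ∧ keyCol B k < p (keyRow B k) ∧ T (keyRow B k) (keyCol B k) = v := by
  unfold weight cellWeight letterWeight at h
  split_ifs at h <;> simp_all

lemma sum_Ico_readKey {M : Type*} [AddCommMonoid M] (f : ℕ → M) (r c₁ c₂ : ℕ) :
    ∑ k ∈ Ico (readKey B r c₁) (readKey B r c₂), f k = ∑ x ∈ Ico c₁ c₂, f (readKey B r x) := by
  have hkey : ∀ x, readKey B r x = x + readKey B r 0 := fun x => by
    rw [← zero_add x, readKey_add_right, zero_add, add_comm]
  rw [hkey c₁, hkey c₂, ← sum_Ico_add']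
  exact sum_congr rfl fun x _ => by rw [hkey x]

lemma prefixSum_weight (hB : ∀ r c, c < p r → r < B ∧ c < B) :
    prefixSum (weight B v p T) (B * B) = contentOf p T v - contentOf p T (v + 1) := by
  have hrange : prefixSum (weight B v p T) (B * B) =
      ∑ k ∈ range (B * B), cellWeight v p T (keyRow B k) (keyCol B k) :=
    sum_congr rfl fun k hk => if_pos (mem_range.1 hk)
  rw [hrange, sum_range_mul_keys (cellWeight v p T)]
  simp only [cellWeight]
  rw [← sum_filter, ← cells, contentOf_eq_card hB, contentOf_eq_card hB, card_filter, card_filter]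
  simp only [letterWeight, sum_sub_distrib]
  push_cast
  rfl

lemma weight_setCell {k₀ : ℕ} (hk₀ : k₀ < B * B) (hc : keyCol B k₀ < p (keyRow B k₀)) :
    weight B v p (setCell T (keyRow B k₀) (keyCol B k₀) (v + 1)) =
      update (weight B v p T) k₀ (-1) := by
  funext k
  rcases eq_or_ne k k₀ with rfl | hne
  · simp [weight, cellWeight, setCell, letterWeight, hk₀, hc]
  rw [update_of_ne hne, weight, weight]
  split_ifs with hk
  · have hcell : ¬(keyRow B k = keyRow B k₀ ∧ keyCol B k = keyCol B k₀) := by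
      rintro ⟨hr, hc⟩
      rw [← readKey_keyRow_keyCol hk, hr, hc, readKey_keyRow_keyCol hk₀] at hne
      exact hne rfl
    simp only [cellWeight, setCell, if_neg hcell]
  · rfl

/-- The `v`'s of row `r` up to column `c` sit above `v + 1`'s of row `r + 1`, so the signature
summed over the stretch of reading word from column `d` of row `r + 1` to column `c` of row `r`
is not positive. -/
lemma sum_Ico_weight_nonpos (hB : ∀ r c, c < p r → r < B ∧ c < B) (hT : IsSSYT p T)
    {r c d : ℕ} (hc : c < p (r + 1)) (hv' : T (r + 1) c = v + 1)
    (hd : v < T (r + 1) d) (hdmin : ∀ x < d, T (r + 1) x ≤ v) :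
    ∑ k ∈ Ico (readKey B (r + 1) d) (readKey B r (c + 1)), weight B v p T k ≤ 0 := by
  obtain ⟨hrB, hcB⟩ := hB _ _ hc
  obtain ⟨hrow, hcol, -⟩ := hT
  have hdc : d ≤ c := by
    by_contra h
    exact absurd (hdmin c (by omega)) (by omega)
  have hrows : readKey B (r + 1) B = readKey B r 0 := by simpa using readKey_succ_row hrB 0
  rw [← sum_Ico_consecutive _ (n := readKey B r 0)
      (by rw [← hrows, readKey, readKey]; omega) (by rw [readKey, readKey]; omega),
    sum_Ico_readKey, ← hrows, sum_Ico_readKey,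
    sum_congr rfl fun x hx => weight_readKey (by omega) (mem_Ico.1 hx).2,
    sum_congr rfl fun x hx => weight_readKey (by omega) (by have := (mem_Ico.1 hx).2; omega)]
  have hleft : ∑ x ∈ Ico 0 d, cellWeight v p T r x ≤ 0 :=
    sum_nonpos fun x hx => cellWeight_nonpos fun _ => by
      have := hcol r (r + 1) x (by omega) (by have := (mem_Ico.1 hx).2; omega)
      have := hdmin x (mem_Ico.1 hx).2
      omega
  have hpaired : ∑ x ∈ Ico d (c + 1), (cellWeight v p T (r + 1) x + cellWeight v p T r x) ≤ 0 :=
    sum_nonpos fun x hx => by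
      obtain ⟨hdx, hxc⟩ := mem_Ico.1 hx
      have hxp : x < p (r + 1) := by omega
      have := hrow (r + 1) d x hdx hxp
      have := hrow (r + 1) x c (by omega) hc
      have hx' : T (r + 1) x = v + 1 := by omega
      have := cellWeight_le_one (v := v) (p := p) (T := T) r x
      simp only [cellWeight, if_pos hxp, hx', letterWeight, Nat.succ_ne_self, if_false, if_true]
      omega
  have hright : ∑ x ∈ Ico (c + 1) B, cellWeight v p T (r + 1) x ≤ 0 :=
    sum_nonpos fun x hx => cellWeight_nonpos fun hxp => by
      have := hrow (r + 1) c x (by have := (mem_Ico.1 hx).1; omega) hxp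
      omega
  have := sum_Ico_consecutive (fun x => cellWeight v p T (r + 1) x) (show d ≤ c + 1 by omega)
    (show c + 1 ≤ B by omega)
  have := sum_Ico_consecutive (fun x => cellWeight v p T r x) (Nat.zero_le d)
    (show d ≤ c + 1 by omega)
  rw [sum_add_distrib] at hpaired
  omega

variable (hB : ∀ r c, c < p r → r < B ∧ c < B) (hv : contentOf p T (v + 1) < contentOf p T v)
include hB hv

lemma prefixSum_weight_pos : 0 < prefixSum (weight B v p T) (B * B) := by
  rw [prefixSum_weight hB]
  omega

lemma lowerKey_add_one : lowerKey B v p T + 1 = firstPeak (weight B v p T) (B * B) :=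
  lowerIndex_add_one (prefixSum_weight_pos hB hv)

lemma lowerKey_spec :
    lowerKey B v p T < B * B ∧ keyCol B (lowerKey B v p T) < p (keyRow B (lowerKey B v p T)) ∧
      T (keyRow B (lowerKey B v p T)) (keyCol B (lowerKey B v p T)) = v :=
  weight_eq_one (apply_lowerIndex (prefixSum_weight_pos hB hv) weight_le_one)

lemma lower_right_ne (hc : keyCol B (lowerKey B v p T) + 1 < p (keyRow B (lowerKey B v p T))) :
    T (keyRow B (lowerKey B v p T)) (keyCol B (lowerKey B v p T) + 1) ≠ v := by
  intro heq
  obtain ⟨hk, -, -⟩ := lowerKey_spec hB hv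
  obtain ⟨hrB, hcB⟩ := hB _ _ hc
  have hkey : readKey B (keyRow B (lowerKey B v p T)) (keyCol B (lowerKey B v p T) + 1) =
      firstPeak (weight B v p T) (B * B) := by
    rw [readKey_add_right, readKey_keyRow_keyCol hk, lowerKey_add_one hB hv]
  have := apply_firstPeak_nonpos (hkey ▸ readKey_lt hrB hcB)
  rw [← hkey, weight_readKey hrB hcB, cellWeight, if_pos hc, heq] at this
  simp [letterWeight] at this

lemma lower_below_ne (hT : IsSSYT p T)
    (hc : keyCol B (lowerKey B v p T) < p (keyRow B (lowerKey B v p T) + 1)) :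
    T (keyRow B (lowerKey B v p T) + 1) (keyCol B (lowerKey B v p T)) ≠ v + 1 := by
  intro heq
  obtain ⟨hk, -, -⟩ := lowerKey_spec hB hv
  have hfirst := lowerKey_add_one hB hv
  generalize lowerKey B v p T = k at hk hc heq hfirst
  obtain ⟨hrB, hcB⟩ := hB _ _ hc
  have hex : ∃ x, v < T (keyRow B k + 1) x := ⟨keyCol B k, by rw [heq]; exact Nat.lt_succ_self v⟩
  have hdc : Nat.find hex ≤ keyCol B k := Nat.find_min' hex (by omega)
  have hnonpos := sum_Ico_weight_nonpos hB hT hc heq (Nat.find_spec hex)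
    fun x hx => not_lt.1 (Nat.find_min hex hx)
  rw [readKey_add_right, readKey_keyRow_keyCol hk, hfirst] at hnonpos
  refine (sum_Ico_firstPeak_pos ?_).not_ge hnonpos
  have hkey : readKey B (keyRow B k + 1) (B + keyCol B k) = k := by
    rw [readKey_succ_row hrB, readKey_keyRow_keyCol hk]
  rw [← hfirst]
  generalize Nat.find hex = d at hdc ⊢
  unfold readKey at hkey ⊢
  omega

theorem isSSYT_lower (hp : Antitone p) (hT : IsSSYT p T) : IsSSYT p (lower B v p T) := by
  obtain ⟨-, hc, hval⟩ := lowerKey_spec hB hv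
  exact isSSYT_setCell_succ hT hp hc hval (lower_right_ne hB hv) (lower_below_ne hB hv hT)

lemma contentOf_lower (i : ℕ) : contentOf p (lower B v p T) i = moveUnit (contentOf p T) v i := by
  obtain ⟨-, hc, hval⟩ := lowerKey_spec hB hv
  have := contentOf_setCell (T := T) hB hc (v + 1) i
  rw [hval] at this
  unfold lower moveUnit
  split_ifs with h₁ h₂
  · rw [h₁, if_pos rfl, if_neg (Nat.succ_ne_self v)] at this
    rw [h₁]
    omega
  · rw [h₂, if_neg (Nat.succ_ne_self v).symm, if_pos rfl] at this
    rw [h₂]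
    omega
  · rw [if_neg (Ne.symm h₁), if_neg (Ne.symm h₂)] at this
    omega

lemma weight_lower :
    weight B v p (lower B v p T) = update (weight B v p T) (lowerKey B v p T) (-1) :=
  weight_setCell (lowerKey_spec hB hv).1 (lowerKey_spec hB hv).2.1

lemma setCell_lower :
    setCell (lower B v p T) (keyRow B (lowerKey B v p T)) (keyCol B (lowerKey B v p T)) v = T := by
  obtain ⟨-, -, hval⟩ := lowerKey_spec hB hv
  conv_rhs => rw [← setCell_setCell_self (T := T) (keyRow B (lowerKey B v p T))
    (keyCol B (lowerKey B v p T)) (v + 1)]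
  rw [hval]
  rfl

omit hv in
lemma injOn_lower : Set.InjOn (lower B v p) {T | contentOf p T (v + 1) < contentOf p T v} := by
  intro T₁ h₁ T₂ h₂ he
  have hleast : IsLeast {k | IsRaisingIndex (weight B v p (lower B v p T₁)) (B * B) k}
      (lowerKey B v p T₁) := by
    rw [weight_lower hB h₁]
    exact isLeast_lowerIndex (prefixSum_weight_pos hB h₁) weight_le_one
  rw [he, weight_lower hB h₂] at hleast
  have hk : lowerKey B v p T₁ = lowerKey B v p T₂ :=
    hleast.unique (isLeast_lowerIndex (prefixSum_weight_pos hB h₂) weight_le_one)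
  rw [← setCell_lower hB h₁, ← setCell_lower hB h₂, he, hk]

end Lowering

lemma exists_cells_bound {p : ℕ → ℕ} (hp : Antitone p) (hfin : (support p).Finite) :
    ∃ B, ∀ r c, c < p r → r < B ∧ c < B := by
  obtain ⟨M, hM⟩ := hfin.bddAbove
  refine ⟨max (M + 1) (p 0), fun r c hc => ⟨?_, ?_⟩⟩
  · exact lt_max_of_lt_left (Nat.lt_succ_of_le (hM (mem_support.2 (by omega))))
  · exact lt_max_of_lt_right (hc.trans_le (hp (Nat.zero_le r)))

theorem kostka_le_kostka_moveUnit {p : ℕ → ℕ} (hp : Antitone p) (hfin : (support p).Finite)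
    {α : ℕ → ℕ} {v : ℕ} (hα : α (v + 1) < α v) : Kostka p α ≤ Kostka p (moveUnit α v) := by
  obtain ⟨B, hB⟩ := exists_cells_bound hp hfin
  have hv : ∀ T, (∀ i, contentOf p T i = α i) → contentOf p T (v + 1) < contentOf p T v :=
    fun T hcont => by rwa [hcont, hcont]
  refine Set.ncard_le_ncard_of_injOn (lower B v p) ?_
    ((injOn_lower hB).mono fun T hT => hv T hT.2) (finite_setOf_content hB _)
  rintro T ⟨hT, hcont⟩
  refine ⟨isSSYT_lower hB (hv T hcont) hp hT, fun i => ?_⟩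
  rw [contentOf_lower hB (hv T hcont), funext hcont]

end KostkaDominance

lemma IsComposition.exists_sum_range_eq {n : ℕ} {α : ℕ → ℕ} (h : IsComposition n α) :
    ∃ V, ∀ r, V ≤ r → ∑ i ∈ Finset.range r, α i = n := by
  obtain ⟨M, hM⟩ := h.1.bddAbove
  refine ⟨M + 1, fun r hr => ?_⟩
  rw [← h.2, finsum_eq_sum_of_support_subset α fun i hi => ?_]
  have := hM hi
  simp only [Finset.coe_range, Set.mem_Iio]
  omega

theorem kostka_note_stmt8 {n : ℕ} (lam μ ν : ℕ → ℕ)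
    (hlam : IsPartition n lam) (hμ : IsPartition n μ) (hν : IsPartition n ν)
    (h : Dominates μ ν) :
    Kostka lam μ ≤ Kostka lam ν := by
  obtain ⟨Vμ, hVμ⟩ := hμ.2.exists_sum_range_eq
  obtain ⟨Vν, hVν⟩ := hν.2.exists_sum_range_eq
  refine KostkaDominance.le_of_dominates (Kostka lam)
    (fun α v hα => KostkaDominance.kostka_le_kostka_moveUnit hlam.1 hlam.2.1 hα) hν.1
    (max Vμ Vν) h fun r hr => ?_
  rw [hVμ r (le_of_max_le_left hr), hVν r (le_of_max_le_right hr)]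
end

section
/- For partitions λ and μ of n, the Kostka number K_{λμ} is positive (i.e., there exists a semistandard λ-tableau of content μ) if and only if λ dominates μ. -/
/-! Necessity: in a semistandard tableau of partition shape every entry of row `r` is at least
`r`, so the `μ₀ + ⋯ + μ_{R-1}` entries smaller than `R` all lie in the first `R` rows.

Sufficiency, by induction on a bound `m + 1` for the letters of `μ`: deleting the lowest cell of
each of the first `μ m` columns of `λ` leaves a shape that still dominates `μ` with its last part
removed. A tableau of that shape with all entries `< m`, given by induction, becomes one of shape
`λ` and content `μ` on writing `m` into the deleted cells, which form a horizontal strip. -/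

open Finset Function

theorem IsComposition.sum_le {n : ℕ} {p : ℕ → ℕ} (h : IsComposition n p) (s : Finset ℕ) :
    ∑ i ∈ s, p i ≤ n := by
  obtain ⟨hfin, hsum⟩ := h
  have hsupp : support p ⊆ ↑(hfin.toFinset ∪ s) := by simp
  rw [← hsum, finsum_eq_sum_of_support_subset p hsupp]
  exact sum_le_sum_of_subset subset_union_right

theorem isComposition_iff_sum_range {n N : ℕ} {p : ℕ → ℕ} (hp : ∀ r, N ≤ r → p r = 0) :
    IsComposition n p ↔ ∑ i ∈ range N, p i = n := by
  have hsupp : support p ⊆ ↑(range N) := fun r hr => by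
    by_contra h
    exact hr (hp r (by simpa using h))
  rw [IsComposition, finsum_eq_sum_of_support_subset p hsupp]
  exact and_iff_right ((finite_toSet _).subset hsupp)

namespace IsPartition

variable {n : ℕ} {p : ℕ → ℕ}

theorem le (h : IsPartition n p) (r : ℕ) : p r ≤ n := by
  simpa using h.2.sum_le {r}

theorem eq_zero_of_le (h : IsPartition n p) {r : ℕ} (hr : n ≤ r) : p r = 0 := by
  by_contra hne
  have hpos : ∀ i ∈ range (r + 1), 1 ≤ p i := fun i hi =>
    (Nat.one_le_iff_ne_zero.2 hne).trans (h.1 (Nat.lt_succ_iff.1 (mem_range.1 hi)))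
  have := (card_nsmul_le_sum _ _ _ hpos).trans (h.2.sum_le (range (r + 1)))
  rw [card_range, smul_eq_mul, mul_one] at this
  omega

theorem lt_of_pos (h : IsPartition n p) {r : ℕ} (hr : 0 < p r) : r < n :=
  lt_of_not_ge fun hnr => hr.ne' (h.eq_zero_of_le hnr)

theorem sum_range (h : IsPartition n p) {N : ℕ} (hN : n ≤ N) : ∑ i ∈ range N, p i = n :=
  (isComposition_iff_sum_range fun _ hr => h.eq_zero_of_le (hN.trans hr)).1 h.2

end IsPartition

def cells (p : ℕ → ℕ) (s : Finset ℕ) : Finset (ℕ × ℕ) :=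
  s.biUnion fun r => {r} ×ˢ range (p r)

@[simp]
theorem mem_cells {p : ℕ → ℕ} {s : Finset ℕ} {q : ℕ × ℕ} :
    q ∈ cells p s ↔ q.1 ∈ s ∧ q.2 < p q.1 := by
  obtain ⟨a, b⟩ := q
  simp [cells]

theorem card_cells (p : ℕ → ℕ) (s : Finset ℕ) : (cells p s).card = ∑ r ∈ s, p r := by
  rw [cells, card_biUnion]
  · simp
  · intro a _ b _ hab
    simp [disjoint_left, hab.symm]

def diagram (p : ℕ → ℕ) : Set (ℕ × ℕ) := {q | q.2 < p q.1}

theorem diagram_mono {ν lam : ℕ → ℕ} (h : ∀ r, ν r ≤ lam r) : diagram ν ⊆ diagram lam :=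
  fun q hq => lt_of_lt_of_le hq (h q.1)

theorem IsPartition.diagram_eq_cells {n : ℕ} {p : ℕ → ℕ} (h : IsPartition n p) :
    diagram p = ↑(cells p (range n)) := by
  ext q
  simpa [diagram] using fun hq => h.lt_of_pos (Nat.zero_lt_of_lt hq)

theorem IsPartition.finite_diagram {n : ℕ} {p : ℕ → ℕ} (h : IsPartition n p) :
    (diagram p).Finite := by
  rw [h.diagram_eq_cells]
  exact finite_toSet _

theorem IsPartition.ncard_diagram {n : ℕ} {p : ℕ → ℕ} (h : IsPartition n p) :
    (diagram p).ncard = n := by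
  rw [h.diagram_eq_cells, Set.ncard_coe_finset, card_cells, h.sum_range le_rfl]

theorem contentOf_eq_ncard (p : ℕ → ℕ) (T : ℕ → ℕ → ℕ) (i : ℕ) :
    contentOf p T i = {q ∈ diagram p | T q.1 q.2 = i}.ncard := rfl

theorem IsPartition.contentOf_eq_card {n : ℕ} {p : ℕ → ℕ} (h : IsPartition n p)
    (T : ℕ → ℕ → ℕ) (i : ℕ) :
    contentOf p T i = {q ∈ cells p (range n) | T q.1 q.2 = i}.card := by
  rw [contentOf_eq_ncard, h.diagram_eq_cells, ← Set.ncard_coe_finset, coe_filter]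
  rfl

theorem contentOf_apply_pos {p : ℕ → ℕ} {T : ℕ → ℕ → ℕ} (hp : (diagram p).Finite) {r c : ℕ}
    (hc : c < p r) : 0 < contentOf p T (T r c) :=
  (Set.ncard_pos (hp.subset (Set.sep_subset _ _))).2 ⟨(r, c), hc, rfl⟩

theorem IsSSYT.row_le {p : ℕ → ℕ} {T : ℕ → ℕ → ℕ} (hp : Antitone p) (hT : IsSSYT p T) :
    ∀ {r c : ℕ}, c < p r → r ≤ T r c
  | 0, _, _ => Nat.zero_le _
  | r + 1, c, hc =>
    (row_le hp hT (hc.trans_le (hp r.le_succ))).trans_lt (hT.2.1 r (r + 1) c r.lt_succ_self hc)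

theorem dominates_of_isSSYT {n : ℕ} {lam μ : ℕ → ℕ} {T : ℕ → ℕ → ℕ} (hlam : IsPartition n lam)
    (hT : IsSSYT lam T) (hc : ∀ i, contentOf lam T i = μ i) : Dominates lam μ := by
  intro R
  have hrows : {q ∈ cells lam (range n) | T q.1 q.2 ∈ range R} ⊆ cells lam (range R) := by
    intro q hq
    simp only [mem_filter, mem_cells, mem_range] at hq ⊢
    exact ⟨(hT.row_le hlam.1 hq.1.2).trans_lt hq.2, hq.1.2⟩
  calc ∑ i ∈ range R, μ i
      = ∑ i ∈ range R, {q ∈ cells lam (range n) | T q.1 q.2 = i}.card := by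
        simp only [← hc, hlam.contentOf_eq_card]
    _ = {q ∈ cells lam (range n) | T q.1 q.2 ∈ range R}.card :=
        sum_card_fiberwise_eq_card_filter _ _ _
    _ ≤ (cells lam (range R)).card := card_le_card hrows
    _ = ∑ r ∈ range R, lam r := card_cells lam (range R)

theorem finite_setOf_support_bounded (N : ℕ) :
    {T : ℕ → ℕ → ℕ | ∀ r c, T r c ≠ 0 → r < N ∧ c < N ∧ T r c < N}.Finite := by
  let Φ : (Fin N → Fin N → Fin N) → ℕ → ℕ → ℕ :=
    fun f r c => if h : r < N ∧ c < N then f ⟨r, h.1⟩ ⟨c, h.2⟩ else 0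
  refine (Set.finite_range Φ).subset fun T hT => ?_
  have hbound (r c : Fin N) : T r c < N := by
    by_cases h0 : T r c = 0
    · exact h0 ▸ r.pos
    · exact (hT r c h0).2.2
  refine ⟨fun r c => ⟨T r c, hbound r c⟩, funext₂ fun r c => ?_⟩
  by_cases h : r < N ∧ c < N
  · simp [Φ, h]
  · have hT0 : T r c = 0 := by_contra fun hne => h ⟨(hT r c hne).1, (hT r c hne).2.1⟩
    simp [Φ, h, hT0]

theorem finite_setOf_isSSYT_contentOf {n : ℕ} {lam μ : ℕ → ℕ} (hlam : IsPartition n lam)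
    (hμ : IsPartition n μ) :
    {T : ℕ → ℕ → ℕ | IsSSYT lam T ∧ ∀ i, contentOf lam T i = μ i}.Finite := by
  refine (finite_setOf_support_bounded n).subset ?_
  rintro T ⟨hT, hc⟩ r c hne
  have hcr : c < lam r := lt_of_not_ge fun h => hne (hT.2.2 r c h)
  refine ⟨hlam.lt_of_pos (by omega), hcr.trans_le (hlam.le r), hμ.lt_of_pos ?_⟩
  rw [← hc]
  exact contentOf_apply_pos hlam.finite_diagram hcr

theorem sum_update_zero_add {f : ℕ → ℕ} {m : ℕ} {s : Finset ℕ} (hm : m ∈ s) :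
    ∑ i ∈ s, update f m 0 i + f m = ∑ i ∈ s, f i := by
  rw [sum_update_of_mem hm, zero_add, sum_eq_sum_sdiff_singleton_add hm]

theorem antitone_update_zero {f : ℕ → ℕ} (hf : Antitone f) {m : ℕ}
    (hm : ∀ j, m < j → f j = 0) : Antitone (update f m 0) := by
  intro a b hab
  rcases eq_or_ne b m with rfl | hb
  · simp
  rcases eq_or_ne a m with rfl | ha
  · simp [hb, hm b (lt_of_le_of_ne hab hb.symm)]
  · simpa [ha, hb] using hf hab

theorem IsPartition.update_zero {n m : ℕ} {μ : ℕ → ℕ} (hμ : IsPartition n μ)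
    (hm : ∀ j, m < j → μ j = 0) : IsPartition (n - μ m) (update μ m 0) := by
  refine ⟨antitone_update_zero hμ.1 hm, (isComposition_iff_sum_range (N := n + m + 1) ?_).2 ?_⟩
  · intro j hj
    rw [update_of_ne (by omega), hμ.eq_zero_of_le (by omega)]
  · have := sum_update_zero_add (f := μ) (mem_range.2 (by omega : m < n + m + 1))
    rw [hμ.sum_range (by omega)] at this
    omega

/-- The shape obtained from `lam` by deleting the lowest cell of each of its first `k` columns. -/
def dropStrip (lam : ℕ → ℕ) (k : ℕ) : ℕ → ℕ :=
  fun r => lam r - min k (lam r) + min k (lam (r + 1))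

section dropStrip

variable {lam : ℕ → ℕ} {k : ℕ}

theorem dropStrip_le (hlam : Antitone lam) (r : ℕ) : dropStrip lam k r ≤ lam r := by
  have : lam (r + 1) ≤ lam r := hlam r.le_succ
  simp only [dropStrip]
  omega

theorem le_dropStrip (hlam : Antitone lam) (r : ℕ) : lam (r + 1) ≤ dropStrip lam k r := by
  have : lam (r + 1) ≤ lam r := hlam r.le_succ
  simp only [dropStrip]
  omega

theorem antitone_dropStrip (hlam : Antitone lam) : Antitone (dropStrip lam k) :=
  antitone_nat_of_succ_le fun r => (dropStrip_le hlam (r + 1)).trans (le_dropStrip hlam r)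

theorem sum_range_dropStrip_add (hk : k ≤ lam 0) (r : ℕ) :
    ∑ s ∈ range r, dropStrip lam k s + k = ∑ s ∈ range r, lam s + min k (lam r) := by
  induction r with
  | zero => simp [hk]
  | succ r ih =>
    rw [sum_range_succ, sum_range_succ]
    simp only [dropStrip] at ih ⊢
    omega

theorem IsPartition.dropStrip {n : ℕ} (hlam : IsPartition n lam) (hk : k ≤ lam 0) :
    IsPartition (n - k) (dropStrip lam k) := by
  refine ⟨antitone_dropStrip hlam.1, (isComposition_iff_sum_range (N := n) ?_).2 ?_⟩
  · intro r hr
    exact Nat.eq_zero_of_le_zero (hlam.eq_zero_of_le hr ▸ dropStrip_le hlam.1 r)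
  · have := sum_range_dropStrip_add hk n
    rw [hlam.sum_range le_rfl, hlam.eq_zero_of_le le_rfl] at this
    omega

theorem Dominates.apply_le_apply_zero {μ : ℕ → ℕ} (hdom : Dominates lam μ) (hμ : Antitone μ)
    (m : ℕ) : μ m ≤ lam 0 :=
  (hμ m.zero_le).trans (by simpa using hdom 1)

theorem Dominates.dropStrip_update {μ : ℕ → ℕ} (hdom : Dominates lam μ) (hμ : Antitone μ)
    (m : ℕ) : Dominates (dropStrip lam (μ m)) (update μ m 0) := by
  intro r
  have hsum := sum_range_dropStrip_add (hdom.apply_le_apply_zero hμ m) r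
  rcases le_or_gt r m with hr | hr
  · have hupd : ∑ i ∈ range r, update μ m 0 i = ∑ i ∈ range r, μ i :=
      sum_congr rfl fun i hi => update_of_ne ((mem_range.1 hi).trans_le hr).ne _ _
    -- if `lam r < μ m ≤ μ r`, the `μ m - lam r` cells deleted above row `r` are paid for by
    -- dominance at `r + 1`
    have hdom' := hdom (r + 1)
    rw [sum_range_succ, sum_range_succ] at hdom'
    have := hμ hr
    have := hdom r
    omega
  · have := sum_update_zero_add (f := μ) (mem_range.2 hr)
    have := hdom r
    omega

end dropStrip

def fillStrip (ν lam : ℕ → ℕ) (T : ℕ → ℕ → ℕ) (m : ℕ) : ℕ → ℕ → ℕ :=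
  fun r c => if c < ν r then T r c else if c < lam r then m else 0

section fillStrip

variable {ν lam : ℕ → ℕ} {T : ℕ → ℕ → ℕ} {m : ℕ}

theorem isSSYT_fillStrip (hlam : Antitone lam) (hν : ∀ r, ν r ≤ lam r)
    (hstrip : ∀ r, lam (r + 1) ≤ ν r) (hT : IsSSYT ν T) (hm : ∀ r c, c < ν r → T r c < m) :
    IsSSYT lam (fillStrip ν lam T m) := by
  refine ⟨fun r c₁ c₂ h₁₂ h₂ => ?_, fun r₁ r₂ c h₁₂ h₂ => ?_, fun r c hc => ?_⟩
  · by_cases hc₂ : c₂ < ν r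
    · simpa [fillStrip, hc₂, h₁₂.trans_lt hc₂] using hT.1 r c₁ c₂ h₁₂ hc₂
    · by_cases hc₁ : c₁ < ν r
      · simpa [fillStrip, hc₁, hc₂, h₂] using (hm r c₁ hc₁).le
      · simp [fillStrip, hc₁, hc₂, h₂, h₁₂.trans_lt h₂]
  · have hc₁ : c < ν r₁ := h₂.trans_le ((hlam (Nat.succ_le_of_lt h₁₂)).trans (hstrip r₁))
    by_cases hc₂ : c < ν r₂
    · simpa [fillStrip, hc₁, hc₂] using hT.2.1 r₁ r₂ c h₁₂ hc₂
    · simpa [fillStrip, hc₁, hc₂, h₂] using hm r₁ c hc₁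
  · simp [fillStrip, not_lt.2 ((hν r).trans hc), not_lt.2 hc]

theorem contentOf_fillStrip_of_ne (hν : ∀ r, ν r ≤ lam r) {i : ℕ} (hi : i ≠ m) :
    contentOf lam (fillStrip ν lam T m) i = contentOf ν T i := by
  simp only [contentOf]
  congr 1
  ext ⟨r, c⟩
  by_cases hc : c < ν r
  · simp [fillStrip, hc, hc.trans_le (hν r)]
  · simp +contextual [fillStrip, hc, Ne.symm hi]

theorem contentOf_fillStrip_self (hm : ∀ r c, c < ν r → T r c < m) :
    contentOf lam (fillStrip ν lam T m) m = (diagram lam \ diagram ν).ncard := by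
  simp only [contentOf]
  congr 1
  ext ⟨r, c⟩
  by_cases hc : c < ν r
  · simp [fillStrip, diagram, hc, (hm r c hc).ne]
  · simp +contextual [fillStrip, diagram, hc]

theorem fillStrip_lt_succ (hm : ∀ r c, c < ν r → T r c < m) (r c : ℕ) :
    fillStrip ν lam T m r c < m + 1 := by
  simp only [fillStrip]
  split_ifs with h
  · exact (hm r c h).trans m.lt_succ_self
  · exact m.lt_succ_self
  · exact m.succ_pos

end fillStrip

theorem contentOf_fillStrip_dropStrip {n m : ℕ} {lam μ : ℕ → ℕ} {T : ℕ → ℕ → ℕ}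
    (hlam : IsPartition n lam) (hμ : IsPartition n μ) (hk : μ m ≤ lam 0)
    (hT : ∀ i, contentOf (dropStrip lam (μ m)) T i = update μ m 0 i)
    (hm : ∀ r c, c < dropStrip lam (μ m) r → T r c < m) (i : ℕ) :
    contentOf lam (fillStrip (dropStrip lam (μ m)) lam T m) i = μ i := by
  rcases eq_or_ne i m with rfl | hi
  · rw [contentOf_fillStrip_self hm, Set.ncard_sdiff (diagram_mono (dropStrip_le hlam.1))
      (hlam.dropStrip hk).finite_diagram, hlam.ncard_diagram, (hlam.dropStrip hk).ncard_diagram]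
    have := hμ.le i
    omega
  · rw [contentOf_fillStrip_of_ne (dropStrip_le hlam.1) hi, hT, update_of_ne hi]

theorem exists_isSSYT_of_dominates {m n : ℕ} {lam μ : ℕ → ℕ} (hlam : IsPartition n lam)
    (hμ : IsPartition n μ) (hdom : Dominates lam μ) (hμm : ∀ j, m ≤ j → μ j = 0) :
    ∃ T, IsSSYT lam T ∧ (∀ i, contentOf lam T i = μ i) ∧ ∀ r c, c < lam r → T r c < m := by
  induction m generalizing n lam μ with
  | zero =>
    have hn : n = 0 := by simpa [funext fun j => hμm j j.zero_le] using hμ.2.2.symm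
    have hlam0 (r : ℕ) : lam r = 0 := Nat.eq_zero_of_le_zero (hn ▸ hlam.le r)
    refine ⟨fun _ _ => 0, ⟨fun _ _ _ _ _ => le_rfl, fun _ r c _ h => ?_, fun _ _ _ => rfl⟩,
      fun i => ?_, fun r c h => ?_⟩
    · simp [hlam0] at h
    · simp [contentOf, hlam0, hμm]
    · simp [hlam0] at h
  | succ m ih =>
    have hk : μ m ≤ lam 0 := hdom.apply_le_apply_zero hμ.1 m
    have hμm' (j : ℕ) (hj : m ≤ j) : update μ m 0 j = 0 := by
      rcases hj.eq_or_lt with rfl | hj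
      · simp
      · rw [update_of_ne hj.ne', hμm j hj]
    obtain ⟨T, hT, hcont, hlt⟩ := ih (hlam.dropStrip hk) (hμ.update_zero hμm)
      (hdom.dropStrip_update hμ.1 m) hμm'
    exact ⟨fillStrip (dropStrip lam (μ m)) lam T m,
      isSSYT_fillStrip hlam.1 (dropStrip_le hlam.1) (le_dropStrip hlam.1) hT hlt,
      contentOf_fillStrip_dropStrip hlam hμ hk hcont hlt, fun r c _ => fillStrip_lt_succ hlt r c⟩

theorem kostka_note_stmt9 {n : ℕ} (lam μ : ℕ → ℕ)
    (hlam : IsPartition n lam) (hμ : IsPartition n μ) :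
    0 < Kostka lam μ ↔ Dominates lam μ := by
  constructor
  · intro h
    obtain ⟨T, hT, hc⟩ := Set.nonempty_of_ncard_ne_zero h.ne'
    exact dominates_of_isSSYT hlam hT hc
  · intro hdom
    obtain ⟨T, hT, hc, -⟩ :=
      exists_isSSYT_of_dominates hlam hμ hdom fun j hj => hμ.eq_zero_of_le hj
    exact (Set.ncard_pos (finite_setOf_isSSYT_contentOf hlam hμ)).2 ⟨T, hT, hc⟩
end

section
/- Let λ/κ be a skew shape of size n and let μ, ν be partitions of n with μ ⊵ ν. Then the skew Kostka number K_{λ/κ, μ} ≤ K_{λ/κ, ν}, where K_{λ/κ, μ} counts semistandard skew tableaux of shape λ/κ and content μ. -/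
/-- Semistandard skew tableau of shape `lam / kap`. -/
def IsSkewSSYT (lam kap : ℕ → ℕ) (T : ℕ → ℕ → ℕ) : Prop :=
  (∀ r c₁ c₂, c₁ ≤ c₂ → kap r ≤ c₁ → c₂ < lam r → T r c₁ ≤ T r c₂) ∧
  (∀ r₁ r₂ c, r₁ < r₂ → kap r₁ ≤ c → c < lam r₁ → kap r₂ ≤ c → c < lam r₂ →
      T r₁ c < T r₂ c) ∧
  (∀ r c, c < kap r ∨ lam r ≤ c → T r c = 0)

/-- The number of entries of `T` equal to `i` within the skew diagram `lam / kap`. -/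
noncomputable def skewContentOf (lam kap : ℕ → ℕ) (T : ℕ → ℕ → ℕ) (i : ℕ) : ℕ :=
  {q : ℕ × ℕ | kap q.1 ≤ q.2 ∧ q.2 < lam q.1 ∧ T q.1 q.2 = i}.ncard

/-- The skew Kostka number. -/
noncomputable def SkewKostka (lam kap μ : ℕ → ℕ) : ℕ :=
  {T : ℕ → ℕ → ℕ | IsSkewSSYT lam kap T ∧ ∀ i, skewContentOf lam kap T i = μ i}.ncard

/-!
Read a skew tableau row by row, from the bottom row up and each row from left to right, and let
every letter `i + 1` be an up-step and every letter `i` a down-step of a walk starting at `0`.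
If the tableau has fewer letters `i + 1` than `i`, the walk ends below `0`, and the step by which
it first reaches its minimum reads an `i`. Raising that `i` to `i + 1` (the crystal operator
`f_i`) keeps the tableau semistandard, and it is injective: the raised cell is where the walk of
the new tableau last attains its minimum. So `K_{λ/κ,γ} ≤ K_{λ/κ,γ'}` whenever `γ (i + 1) < γ i`
and `γ'` moves one unit of content from `i` to `i + 1`.

If `γ ⊵ ν`, `γ ≠ ν` and `ν` is a partition, such an `i` can be chosen with a strict partial-sum
inequality `ν 0 + ⋯ + ν i < γ 0 + ⋯ + γ i`, so the move keeps `γ ⊵ ν` and decreases the total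
excess of the partial sums of `γ` over those of `ν`; finitely many moves (through contents that
need not be partitions) lead from `μ` to `ν`.
-/

open Finset

section FirstArgmin

noncomputable def firstArgmin (h : ℕ → ℤ) : ℕ := sInf {t | ∀ s, h t ≤ h s}

variable {h : ℕ → ℤ} {M : ℕ}

lemma exists_forall_le_of_eventually_const (hconst : ∀ t, M ≤ t → h t = h M) :
    ∃ t, ∀ s, h t ≤ h s := by
  obtain ⟨t, -, hmin⟩ := (range (M + 1)).exists_min_image h ⟨0, by simp⟩
  refine ⟨t, fun s => ?_⟩
  rcases le_or_gt s M with hs | hs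
  · exact hmin s (mem_range.2 (by omega))
  · rw [hconst s hs.le]
    exact hmin M (by simp)

lemma firstArgmin_le (hconst : ∀ t, M ≤ t → h t = h M) (s : ℕ) :
    h (firstArgmin h) ≤ h s :=
  Nat.sInf_mem (exists_forall_le_of_eventually_const hconst) s

lemma lt_of_lt_firstArgmin (hconst : ∀ t, M ≤ t → h t = h M) {t : ℕ}
    (ht : t < firstArgmin h) : h (firstArgmin h) < h t := by
  obtain ⟨s, hs⟩ : ∃ s, h s < h t := by
    simpa using Nat.notMem_of_lt_sInf ht
  exact (firstArgmin_le hconst s).trans_lt hs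

lemma exists_firstArgmin_eq_succ (hconst : ∀ t, M ≤ t → h t = h M) (h0 : h 0 = 0)
    (hneg : h M < 0) (hstep : ∀ t, h t - 1 ≤ h (t + 1)) :
    ∃ t, firstArgmin h = t + 1 ∧ h (t + 1) = h t - 1 := by
  have hmin := firstArgmin_le hconst
  obtain ⟨t, ht⟩ : ∃ t, firstArgmin h = t + 1 := by
    refine Nat.exists_eq_add_one_of_ne_zero fun h' => ?_
    have := hmin M
    rw [h', h0] at this
    omega
  have hlt := lt_of_lt_firstArgmin hconst (t := t) (by omega)
  have := hstep t
  rw [ht] at hlt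
  exact ⟨t, ht, by omega⟩

def IsLastMin (h : ℕ → ℤ) (t : ℕ) : Prop := ∀ s, h t ≤ h s ∧ (t < s → h t < h s)

lemma IsLastMin.eq {t t' : ℕ} (ht : IsLastMin h t) (ht' : IsLastMin h t') : t = t' := by
  by_contra hne
  rcases lt_or_gt_of_ne hne with hlt | hlt
  · exact ((ht t').2 hlt).not_ge (ht' t).1
  · exact ((ht' t).2 hlt).not_ge (ht t').1

end FirstArgmin

section Dominance

def moveUnit (γ : ℕ → ℕ) (i : ℕ) : ℕ → ℕ := fun v =>
  if v = i then γ i - 1 else if v = i + 1 then γ (i + 1) + 1 else γ v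

variable {γ ν : ℕ → ℕ} {i B : ℕ}

lemma sum_range_moveUnit (hi : 0 < γ i) (r : ℕ) :
    ∑ x ∈ range r, moveUnit γ i x + (if r = i + 1 then 1 else 0) = ∑ x ∈ range r, γ x := by
  induction r with
  | zero => simp
  | succ r ih =>
    rw [sum_range_succ, sum_range_succ, ← ih]
    simp only [moveUnit]
    split_ifs <;> subst_vars <;> omega

lemma exists_lt_of_dominates_of_ne (hν : Antitone ν) (hdom : Dominates γ ν)
    (htail : ∀ r, B ≤ r → ∑ x ∈ range r, γ x = ∑ x ∈ range r, ν x) (hne : γ ≠ ν) :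
    ∃ i, γ (i + 1) < γ i ∧ ∑ x ∈ range (i + 1), ν x < ∑ x ∈ range (i + 1), γ x := by
  classical
  by_contra! hcon
  have hj := Function.ne_iff.1 hne
  obtain ⟨j, hjne, hjmin⟩ : ∃ j, γ j ≠ ν j ∧ ∀ x < j, γ x = ν x :=
    ⟨Nat.find hj, Nat.find_spec hj, fun x hx => not_not.1 (Nat.find_min hj hx)⟩
  have hpre : ∑ x ∈ range j, γ x = ∑ x ∈ range j, ν x :=
    sum_congr rfl fun x hx => hjmin x (mem_range.1 hx)
  -- Otherwise, from the first index where they differ, `γ` would stay above the antitone `ν`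
  -- and the partial sums would never meet again.
  have hstrict : ∀ k, ν (j + k) < γ (j + k) ∧
      ∑ x ∈ range (j + k + 1), ν x < ∑ x ∈ range (j + k + 1), γ x := by
    intro k
    induction k with
    | zero =>
      have := hdom (j + 1)
      rw [sum_range_succ, sum_range_succ, hpre] at this
      rw [add_zero, sum_range_succ, sum_range_succ, hpre]
      omega
    | succ k ih =>
      have := hν (Nat.le_add_right (j + k) 1)
      have := hcon (j + k)
      rw [← add_assoc, sum_range_succ _ (j + k + 1), sum_range_succ _ (j + k + 1)]
      omega
  have := htail (j + B + 1) (by omega)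
  have := (hstrict B).2
  omega

lemma sum_range_eq_finsum {f : ℕ → ℕ} {B r : ℕ} (hB : B ∈ upperBounds (Function.support f))
    (hr : B < r) : ∑ x ∈ range r, f x = ∑ᶠ x, f x :=
  (finsum_eq_sum_of_support_subset f fun _ hx => mem_range.2 ((hB hx).trans_lt hr)).symm

end Dominance

section Cells

def skewCells (lam kap : ℕ → ℕ) (N : ℕ) : Finset (ℕ × ℕ) :=
  (range N ×ˢ range N).filter fun q => kap q.1 ≤ q.2 ∧ q.2 < lam q.1

/-- Reading order: rows from bottom to top, each row from left to right. -/
def readPos (N : ℕ) (q : ℕ × ℕ) : ℕ := (N - q.1) * N + q.2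

variable {lam kap : ℕ → ℕ} {N : ℕ} {q q' : ℕ × ℕ}

lemma lt_of_mem_skewCells (hq : q ∈ skewCells lam kap N) : q.1 < N ∧ q.2 < N := by
  simpa [skewCells] using (mem_filter.1 hq).1

lemma mem_skewCells (hbox : ∀ r c, c < lam r → r < N ∧ c < N) :
    q ∈ skewCells lam kap N ↔ kap q.1 ≤ q.2 ∧ q.2 < lam q.1 := by
  simp only [skewCells, mem_filter, mem_product, mem_range, and_iff_right_iff_imp]
  exact fun hq => hbox _ _ hq.2

lemma readPos_lt_readPos_of_fst_lt (hq : q.1 < N) (hq' : q'.2 < N) (h : q.1 < q'.1) :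
    readPos N q' < readPos N q := by
  have : (N - q'.1 + 1) * N ≤ (N - q.1) * N := Nat.mul_le_mul_right _ (by omega)
  simp only [readPos, add_one_mul] at this ⊢
  omega

lemma readPos_lt (hq : q ∈ skewCells lam kap N) : readPos N q < N * (N + 1) := by
  have hq := lt_of_mem_skewCells hq
  have : (N - q.1) * N ≤ N * N := Nat.mul_le_mul_right _ (by omega)
  simp only [readPos, mul_add_one]
  omega

lemma rows_of_readPos_between {r a c : ℕ} (hq : q.1 < N ∧ q.2 < N) (hr : r + 1 < N) (hc : c < N)
    (h₁ : readPos N (r + 1, a) ≤ readPos N q) (h₂ : readPos N q ≤ readPos N (r, c)) :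
    (q.1 = r + 1 ∧ a ≤ q.2) ∨ (q.1 = r ∧ q.2 ≤ c) := by
  rcases lt_trichotomy q.1 r with h | h | h
  · have := readPos_lt_readPos_of_fst_lt (q' := (r, c)) hq.1 hc h
    omega
  · exact Or.inr ⟨h, by simpa [readPos, h] using h₂⟩
  · obtain h | h : q.1 = r + 1 ∨ r + 1 < q.1 := by omega
    · exact Or.inl ⟨h, by simpa [readPos, h] using h₁⟩
    · have := readPos_lt_readPos_of_fst_lt (q := (r + 1, a)) hr hq.2 h
      omega

lemma readPos_injOn : Set.InjOn (readPos N) (skewCells lam kap N) := by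
  intro q hq q' hq' h
  have hq := lt_of_mem_skewCells hq
  have hq' := lt_of_mem_skewCells hq'
  rcases lt_trichotomy q.1 q'.1 with h1 | h1 | h1
  · exact absurd h (readPos_lt_readPos_of_fst_lt hq.1 hq'.2 h1).ne'
  · simp only [readPos, h1, add_right_inj] at h
    exact Prod.ext h1 h
  · exact absurd h (readPos_lt_readPos_of_fst_lt hq'.1 hq.2 h1).ne

lemma skewContentOf_eq_card (hbox : ∀ r c, c < lam r → r < N ∧ c < N) (T : ℕ → ℕ → ℕ)
    (v : ℕ) :
    skewContentOf lam kap T v = ((skewCells lam kap N).filter fun q => T q.1 q.2 = v).card := by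
  rw [skewContentOf, ← Set.ncard_coe_finset]
  congr 1
  ext q
  simp [mem_skewCells hbox, and_assoc]

lemma exists_box (hlam : Antitone lam) (hfin : (Function.support lam).Finite) :
    ∃ N, ∀ r c, c < lam r → r < N ∧ c < N := by
  obtain ⟨R, hR⟩ := hfin.bddAbove
  refine ⟨max (R + 1) (lam 0), fun r c hc => ⟨?_, ?_⟩⟩
  · have : r ≤ R := hR (Function.mem_support.2 (by omega))
    omega
  · have := hlam (Nat.zero_le r)
    omega

end Cells

section Height

def bracket (i v : ℕ) : ℤ := (if v = i + 1 then 1 else 0) - if v = i then 1 else 0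

variable (lam kap : ℕ → ℕ) (N : ℕ) in
def bracketHeight (T : ℕ → ℕ → ℕ) (i t : ℕ) : ℤ :=
  ∑ q ∈ (skewCells lam kap N).filter (fun q => readPos N q < t), bracket i (T q.1 q.2)

variable {lam kap : ℕ → ℕ} {N : ℕ} {T : ℕ → ℕ → ℕ} {i s t : ℕ} {q : ℕ × ℕ}

lemma sum_bracket (W : Finset (ℕ × ℕ)) :
    ∑ q ∈ W, bracket i (T q.1 q.2) =
      ((W.filter fun q => T q.1 q.2 = i + 1).card : ℤ) -
        (W.filter fun q => T q.1 q.2 = i).card := by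
  simp [bracket, sum_sub_distrib, sum_boole]

lemma bracketHeight_zero : bracketHeight lam kap N T i 0 = 0 := by
  simp [bracketHeight]

lemma bracketHeight_sub (hst : s ≤ t) :
    bracketHeight lam kap N T i t - bracketHeight lam kap N T i s =
      ∑ q ∈ (skewCells lam kap N).filter (fun q => s ≤ readPos N q ∧ readPos N q < t),
        bracket i (T q.1 q.2) := by
  rw [sub_eq_iff_eq_add, bracketHeight, bracketHeight, sum_filter, sum_filter, sum_filter,
    ← sum_add_distrib]
  refine sum_congr rfl fun q _ => ?_
  split_ifs <;> first | (exfalso; omega) | simp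

lemma bracketHeight_succ_of_readPos_eq (hq : q ∈ skewCells lam kap N) (ht : readPos N q = t) :
    bracketHeight lam kap N T i (t + 1) =
      bracketHeight lam kap N T i t + bracket i (T q.1 q.2) := by
  rw [← sub_eq_iff_eq_add', bracketHeight_sub t.le_succ]
  convert sum_singleton (fun q : ℕ × ℕ => bracket i (T q.1 q.2)) q
  ext q'
  simp only [mem_filter, mem_singleton]
  constructor
  · rintro ⟨hq', h1, h2⟩
    exact readPos_injOn hq' hq (by omega)
  · rintro rfl
    exact ⟨hq, by omega, by omega⟩

lemma bracketHeight_succ_of_forall_ne (h : ∀ q ∈ skewCells lam kap N, readPos N q ≠ t) :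
    bracketHeight lam kap N T i (t + 1) = bracketHeight lam kap N T i t := by
  rw [← sub_eq_zero, bracketHeight_sub t.le_succ]
  refine sum_eq_zero fun q hq => ?_
  simp only [mem_filter] at hq
  exact absurd (by omega) (h q hq.1)

lemma bracketHeight_sub_one_le (t : ℕ) :
    bracketHeight lam kap N T i t - 1 ≤ bracketHeight lam kap N T i (t + 1) := by
  by_cases h : ∃ q ∈ skewCells lam kap N, readPos N q = t
  · obtain ⟨q, hq, rfl⟩ := h
    rw [bracketHeight_succ_of_readPos_eq hq rfl]
    have : -1 ≤ bracket i (T q.1 q.2) := by unfold bracket; split_ifs <;> omega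
    omega
  · push Not at h
    rw [bracketHeight_succ_of_forall_ne h]
    omega

lemma bracketHeight_of_le (ht : N * (N + 1) ≤ t) :
    bracketHeight lam kap N T i t = ∑ q ∈ skewCells lam kap N, bracket i (T q.1 q.2) := by
  rw [bracketHeight, filter_true_of_mem fun q hq => (readPos_lt hq).trans_le ht]

lemma bracketHeight_eventually_const (t : ℕ) (ht : N * (N + 1) ≤ t) :
    bracketHeight lam kap N T i t = bracketHeight lam kap N T i (N * (N + 1)) := by
  rw [bracketHeight_of_le ht, bracketHeight_of_le le_rfl]

variable (lam kap N T i) in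
lemma bracketHeight_firstArgmin_le (s : ℕ) :
    bracketHeight lam kap N T i (firstArgmin (bracketHeight lam kap N T i)) ≤
      bracketHeight lam kap N T i s :=
  firstArgmin_le bracketHeight_eventually_const s

lemma bracketHeight_firstArgmin_lt (ht : t < firstArgmin (bracketHeight lam kap N T i)) :
    bracketHeight lam kap N T i (firstArgmin (bracketHeight lam kap N T i)) <
      bracketHeight lam kap N T i t :=
  lt_of_lt_firstArgmin bracketHeight_eventually_const ht

end Height

section Window

variable {lam kap : ℕ → ℕ} {N : ℕ} {T : ℕ → ℕ → ℕ} {i : ℕ}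

lemma eq_succ_below_segment (hT : IsSkewSSYT lam kap T) (hkap : Antitone kap) {r a c x : ℕ}
    (hc : c < lam r) (hc' : c < lam (r + 1)) (ha : kap r ≤ a) (hai : T r a = i)
    (hci : T r c = i) (hval : T (r + 1) c = i + 1) (hax : a ≤ x) (hxc : x ≤ c) :
    T (r + 1) x = i + 1 := by
  obtain ⟨hrow, hcol, -⟩ := hT
  have hk : kap (r + 1) ≤ x := (hkap r.le_succ).trans (ha.trans hax)
  have := hrow r a x hax ha (by omega)
  have := hrow r x c hxc (by omega) hc
  have := hcol r (r + 1) x r.lt_succ_self (by omega) (by omega) hk (by omega)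
  have := hrow (r + 1) x c hxc hk hc'
  omega

/-- Between `(r + 1, a)` and `(r, c)` in reading order every `i` lies in row `r`, above an
`i + 1`. -/
lemma card_window_le (hT : IsSkewSSYT lam kap T) (hkap : Antitone kap)
    (hbox : ∀ r c, c < lam r → r < N ∧ c < N) {r a c : ℕ} (hp : (r, c) ∈ skewCells lam kap N)
    (hbelow : (r + 1, c) ∈ skewCells lam kap N) (hval : T (r + 1) c = i + 1)
    (ha : kap r ≤ a) (hac : a ≤ c) (hai : T r a = i) (hpi : T r c = i)
    (hfirst : ∀ x, kap r ≤ x → x < a → T r x ≠ i) :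
    let W := (skewCells lam kap N).filter
      fun q => readPos N (r + 1, a) ≤ readPos N q ∧ readPos N q < readPos N (r, c) + 1
    (W.filter fun q => T q.1 q.2 = i).card ≤ (W.filter fun q => T q.1 q.2 = i + 1).card := by
  intro W
  have hpN := lt_of_mem_skewCells hp
  have hbN := lt_of_mem_skewCells hbelow
  rw [mem_skewCells hbox] at hp hbelow
  dsimp only at hp hbelow
  have hcell : ∀ x, a ≤ x → x ≤ c → kap (r + 1) ≤ x ∧ x < lam (r + 1) := fun x h₁ h₂ =>
    ⟨(hkap r.le_succ).trans (ha.trans h₁), by omega⟩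
  have hsucc : ∀ x, a ≤ x → x ≤ c → T (r + 1) x = i + 1 :=
    fun x => eq_succ_below_segment hT hkap hp.2 hbelow.2 ha hai hpi hval
  have hI : W.filter (fun q => T q.1 q.2 = i) ⊆ (Icc a c).image fun x => (r, x) := by
    intro q hq
    simp only [W, mem_filter] at hq
    obtain ⟨⟨hq, h₁, h₂⟩, hqi⟩ := hq
    have hqN := lt_of_mem_skewCells hq
    rw [mem_skewCells hbox] at hq
    rcases rows_of_readPos_between (c := c) hqN hbN.1 hpN.2 h₁ (by omega) with ⟨hr, hx⟩ | ⟨rfl, hx⟩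
    · have := hT.1 (r + 1) a q.2 hx (hcell a le_rfl hac).1 (hr ▸ hq.2)
      rw [hsucc a le_rfl hac, ← hr] at this
      omega
    · have : a ≤ q.2 := not_lt.1 fun h => hfirst q.2 hq.1 h hqi
      exact mem_image.2 ⟨q.2, mem_Icc.2 ⟨this, hx⟩, rfl⟩
  have hJ : (Icc a c).image (fun x => (r + 1, x)) ⊆ W.filter fun q => T q.1 q.2 = i + 1 := by
    intro q hq
    obtain ⟨x, hx, rfl⟩ := mem_image.1 hq
    rw [mem_Icc] at hx
    have := readPos_lt_readPos_of_fst_lt (q := (r, c)) (q' := (r + 1, x)) hpN.1 (by omega)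
      r.lt_succ_self
    simp only [W, mem_filter, mem_skewCells hbox]
    exact ⟨⟨hcell x hx.1 hx.2, by simp [readPos, hx.1], by omega⟩, hsucc x hx.1 hx.2⟩
  calc _ ≤ ((Icc a c).image fun x => (r, x)).card := card_le_card hI
    _ = ((Icc a c).image fun x => (r + 1, x)).card := by
      rw [card_image_of_injective _ (Prod.mk_right_injective r),
        card_image_of_injective _ (Prod.mk_right_injective (r + 1))]
    _ ≤ _ := card_le_card hJ

end Window

section Raise

variable {lam kap : ℕ → ℕ} {N : ℕ} {T : ℕ → ℕ → ℕ} {i : ℕ}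

lemma isSkewSSYT_raise (hT : IsSkewSSYT lam kap T) {r₀ c₀ : ℕ} (hp : kap r₀ ≤ c₀ ∧ c₀ < lam r₀)
    (hpi : T r₀ c₀ = i)
    (hright : ∀ c, c₀ < c → c < lam r₀ → i < T r₀ c)
    (hbelow : ∀ r, r₀ < r → kap r ≤ c₀ → c₀ < lam r → i + 1 < T r c₀) :
    IsSkewSSYT lam kap fun r c => if (r, c) = (r₀, c₀) then i + 1 else T r c := by
  obtain ⟨hrow, hcol, hout⟩ := hT
  refine ⟨fun r c₁ c₂ hle hk hl => ?_, fun r₁ r₂ c hlt hk₁ hl₁ hk₂ hl₂ => ?_, fun r c h => ?_⟩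
  · have := hrow r c₁ c₂ hle hk hl
    simp only [Prod.mk.injEq]
    split_ifs with h₁ h₂ h₂
    · rfl
    · obtain ⟨rfl, rfl⟩ := h₁
      exact hright c₂ (by omega) hl
    · obtain ⟨rfl, rfl⟩ := h₂
      omega
    · exact this
  · have := hcol r₁ r₂ c hlt hk₁ hl₁ hk₂ hl₂
    simp only [Prod.mk.injEq]
    split_ifs with h₁ h₂ h₂
    · omega
    · obtain ⟨rfl, rfl⟩ := h₁
      exact hbelow r₂ hlt hk₂ hl₂
    · obtain ⟨rfl, rfl⟩ := h₂
      omega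
    · exact this
  · have hne : (r, c) ≠ (r₀, c₀) := by
      rintro ⟨⟩
      omega
    simp only [if_neg hne, hout r c h]

lemma skewContentOf_raise (hbox : ∀ r c, c < lam r → r < N ∧ c < N) {r₀ c₀ : ℕ}
    (hp : (r₀, c₀) ∈ skewCells lam kap N) (hpi : T r₀ c₀ = i) :
    skewContentOf lam kap (fun r c => if (r, c) = (r₀, c₀) then i + 1 else T r c) =
      moveUnit (skewContentOf lam kap T) i := by
  funext v
  have hsplit : ∀ U : ℕ → ℕ → ℕ, skewContentOf lam kap U v = (if U r₀ c₀ = v then 1 else 0) +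
      ∑ q ∈ (skewCells lam kap N).erase (r₀, c₀), if U q.1 q.2 = v then 1 else 0 := fun U => by
    rw [skewContentOf_eq_card hbox, card_filter, ← add_sum_erase _ _ hp]
  have hrest : ∀ q ∈ (skewCells lam kap N).erase (r₀, c₀),
      (if (if (q.1, q.2) = (r₀, c₀) then i + 1 else T q.1 q.2) = v then 1 else 0) =
        if T q.1 q.2 = v then 1 else 0 := fun q hq => by
    rw [if_neg (ne_of_mem_erase hq)]
  rw [hsplit, sum_congr rfl hrest, if_pos rfl, moveUnit]
  rcases eq_or_ne v i with rfl | h₁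
  · rw [hsplit T, hpi]
    simp
  rcases eq_or_ne v (i + 1) with rfl | h₂
  · rw [hsplit T, hpi]
    simp [add_comm]
  rw [hsplit T, hpi]
  simp [h₁, h₂, Ne.symm h₁, Ne.symm h₂]

lemma bracketHeight_raise {r₀ c₀ : ℕ} (hp : (r₀, c₀) ∈ skewCells lam kap N) (hpi : T r₀ c₀ = i)
    (t : ℕ) :
    bracketHeight lam kap N (fun r c => if (r, c) = (r₀, c₀) then i + 1 else T r c) i t =
      bracketHeight lam kap N T i t + if readPos N (r₀, c₀) < t then 2 else 0 := by
  have hdiff : ∀ q : ℕ × ℕ,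
      bracket i (if (q.1, q.2) = (r₀, c₀) then i + 1 else T q.1 q.2) - bracket i (T q.1 q.2) =
        if (r₀, c₀) = q then 2 else 0 := fun q => by
    by_cases hq : q = (r₀, c₀)
    · subst hq
      simp [hpi, bracket]
    · simp [hq, Ne.symm hq]
  rw [← sub_eq_iff_eq_add', bracketHeight, bracketHeight, ← sum_sub_distrib,
    sum_congr rfl fun q _ => hdiff q, sum_ite_eq]
  simp [hp]

end Raise

section Lower

variable (lam kap : ℕ → ℕ) (N : ℕ) in
/-- The crystal lowering operator `f_i`. -/
noncomputable def lower (T : ℕ → ℕ → ℕ) (i : ℕ) : ℕ → ℕ → ℕ := fun r c =>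
  if (r, c) ∈ skewCells lam kap N ∧
      readPos N (r, c) + 1 = firstArgmin (bracketHeight lam kap N T i) then i + 1
  else T r c

variable {lam kap : ℕ → ℕ} {N : ℕ} {T : ℕ → ℕ → ℕ} {i : ℕ}

lemma exists_lower_cell (hbox : ∀ r c, c < lam r → r < N ∧ c < N)
    (hlt : skewContentOf lam kap T (i + 1) < skewContentOf lam kap T i) :
    ∃ p ∈ skewCells lam kap N,
      readPos N p + 1 = firstArgmin (bracketHeight lam kap N T i) ∧ T p.1 p.2 = i := by
  have hneg : bracketHeight lam kap N T i (N * (N + 1)) < 0 := by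
    rw [bracketHeight_of_le le_rfl, sum_bracket, ← skewContentOf_eq_card hbox,
      ← skewContentOf_eq_card hbox]
    omega
  obtain ⟨t, ht, hdown⟩ := exists_firstArgmin_eq_succ bracketHeight_eventually_const
    bracketHeight_zero hneg bracketHeight_sub_one_le
  by_cases h : ∃ q ∈ skewCells lam kap N, readPos N q = t
  · obtain ⟨q, hq, rfl⟩ := h
    refine ⟨q, hq, ht.symm, ?_⟩
    rw [bracketHeight_succ_of_readPos_eq hq rfl] at hdown
    unfold bracket at hdown
    split_ifs at hdown <;> omega
  · push Not at h
    rw [bracketHeight_succ_of_forall_ne h] at hdown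
    omega

lemma lower_eq_raise {r₀ c₀ : ℕ} (hp : (r₀, c₀) ∈ skewCells lam kap N)
    (hpos : readPos N (r₀, c₀) + 1 = firstArgmin (bracketHeight lam kap N T i)) :
    lower lam kap N T i = fun r c => if (r, c) = (r₀, c₀) then i + 1 else T r c := by
  funext r c
  unfold lower
  by_cases h : (r, c) = (r₀, c₀)
  · rw [h, if_pos ⟨hp, hpos⟩, if_pos rfl]
  · rw [if_neg h, if_neg]
    rintro ⟨hq, hqpos⟩
    exact h (readPos_injOn hq hp (by omega))

lemma ne_of_readPos_eq_firstArgmin {q : ℕ × ℕ} (hq : q ∈ skewCells lam kap N)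
    (hpos : readPos N q = firstArgmin (bracketHeight lam kap N T i)) : T q.1 q.2 ≠ i := by
  intro hqi
  have hmin := bracketHeight_firstArgmin_le lam kap N T i
    (firstArgmin (bracketHeight lam kap N T i) + 1)
  rw [← hpos, bracketHeight_succ_of_readPos_eq hq rfl, hqi] at hmin
  simp [bracket] at hmin

lemma ne_succ_below_lower_cell (hT : IsSkewSSYT lam kap T) (hkap : Antitone kap)
    (hbox : ∀ r c, c < lam r → r < N ∧ c < N) {r c : ℕ} (hp : (r, c) ∈ skewCells lam kap N)
    (hpos : readPos N (r, c) + 1 = firstArgmin (bracketHeight lam kap N T i)) (hpi : T r c = i)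
    (hbelow : (r + 1, c) ∈ skewCells lam kap N) : T (r + 1) c ≠ i + 1 := by
  intro hval
  classical
  have hpc := (mem_skewCells hbox).1 hp
  have hex : ∃ a, kap r ≤ a ∧ a < lam r ∧ T r a = i := ⟨c, hpc.1, hpc.2, hpi⟩
  obtain ⟨ha, hal, hai⟩ := Nat.find_spec hex
  have hac : Nat.find hex ≤ c := Nat.find_min' hex ⟨hpc.1, hpc.2, hpi⟩
  have hwin := card_window_le hT hkap hbox hp hbelow hval ha hac hai hpi
    fun x hx hxa hxi => Nat.find_min hex hxa ⟨hx, hxa.trans hal, hxi⟩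
  have hs : readPos N (r + 1, Nat.find hex) < readPos N (r, c) + 1 := by
    have := readPos_lt_readPos_of_fst_lt (q' := (r + 1, Nat.find hex))
      (lt_of_mem_skewCells hp).1 (hac.trans_lt (lt_of_mem_skewCells hp).2) r.lt_succ_self
    omega
  have hsum := bracketHeight_sub (lam := lam) (kap := kap) (N := N) (T := T) (i := i) hs.le
  rw [sum_bracket] at hsum
  have := bracketHeight_firstArgmin_lt (hpos ▸ hs)
  rw [← hpos] at this
  omega

lemma isSkewSSYT_lower (hT : IsSkewSSYT lam kap T) (hlam : Antitone lam) (hkap : Antitone kap)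
    (hbox : ∀ r c, c < lam r → r < N ∧ c < N)
    (hlt : skewContentOf lam kap T (i + 1) < skewContentOf lam kap T i) :
    IsSkewSSYT lam kap (lower lam kap N T i) := by
  obtain ⟨⟨r₀, c₀⟩, hp, hpos, hpi⟩ := exists_lower_cell hbox hlt
  have hpc : kap r₀ ≤ c₀ ∧ c₀ < lam r₀ := (mem_skewCells hbox).1 hp
  replace hpi : T r₀ c₀ = i := hpi
  rw [lower_eq_raise hp hpos]
  refine isSkewSSYT_raise hT hpc hpi (fun c hc hcl => ?_) fun r hr hrk hrl => ?_
  · have hnext : (r₀, c₀ + 1) ∈ skewCells lam kap N := (mem_skewCells hbox).2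
      ⟨show kap r₀ ≤ c₀ + 1 by omega, show c₀ + 1 < lam r₀ by omega⟩
    have hne := ne_of_readPos_eq_firstArgmin hnext (by rw [← hpos]; rfl)
    have h₁ := hT.1 r₀ c₀ (c₀ + 1) c₀.le_succ hpc.1 (by omega)
    have h₂ := hT.1 r₀ (c₀ + 1) c hc (by omega) hcl
    dsimp only at hne
    omega
  · have hcell : kap (r₀ + 1) ≤ c₀ ∧ c₀ < lam (r₀ + 1) :=
      ⟨(hkap r₀.le_succ).trans hpc.1, hrl.trans_le (hlam hr)⟩
    have hne := ne_succ_below_lower_cell hT hkap hbox hp hpos hpi ((mem_skewCells hbox).2 hcell)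
    have h₁ := hT.2.1 r₀ (r₀ + 1) c₀ r₀.lt_succ_self hpc.1 hpc.2 hcell.1 hcell.2
    have h₂ : T (r₀ + 1) c₀ ≤ T r c₀ := by
      obtain rfl | h := (Nat.succ_le_of_lt hr).eq_or_lt
      · rfl
      · exact (hT.2.1 (r₀ + 1) r c₀ h hcell.1 hcell.2 hrk hrl).le
    omega

lemma skewContentOf_lower (hbox : ∀ r c, c < lam r → r < N ∧ c < N)
    (hlt : skewContentOf lam kap T (i + 1) < skewContentOf lam kap T i) :
    skewContentOf lam kap (lower lam kap N T i) = moveUnit (skewContentOf lam kap T) i := by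
  obtain ⟨⟨r₀, c₀⟩, hp, hpos, hpi⟩ := exists_lower_cell hbox hlt
  rw [lower_eq_raise hp hpos, skewContentOf_raise hbox hp hpi]

lemma isLastMin_bracketHeight_lower {r₀ c₀ : ℕ} (hp : (r₀, c₀) ∈ skewCells lam kap N)
    (hpos : readPos N (r₀, c₀) + 1 = firstArgmin (bracketHeight lam kap N T i))
    (hpi : T r₀ c₀ = i) :
    IsLastMin (bracketHeight lam kap N (lower lam kap N T i) i) (readPos N (r₀, c₀)) := by
  intro s
  have hdown : bracketHeight lam kap N T i (readPos N (r₀, c₀) + 1) =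
      bracketHeight lam kap N T i (readPos N (r₀, c₀)) - 1 := by
    rw [bracketHeight_succ_of_readPos_eq hp rfl]
    simp [hpi, bracket, sub_eq_add_neg]
  have hmin := bracketHeight_firstArgmin_le lam kap N T i s
  rw [← hpos] at hmin
  rw [lower_eq_raise hp hpos, bracketHeight_raise hp hpi, bracketHeight_raise hp hpi,
    if_neg (lt_irrefl _)]
  split_ifs with hs
  · exact ⟨by omega, fun _ => by omega⟩
  · have := bracketHeight_firstArgmin_lt
      (show s < firstArgmin (bracketHeight lam kap N T i) by omega)
    rw [← hpos] at this
    exact ⟨by omega, fun h => absurd h hs⟩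

lemma lower_injOn (hbox : ∀ r c, c < lam r → r < N ∧ c < N) :
    Set.InjOn (lower lam kap N · i)
      {T | skewContentOf lam kap T (i + 1) < skewContentOf lam kap T i} := by
  intro T hT T' hT' heq
  obtain ⟨⟨r₀, c₀⟩, hp, hpos, hpi⟩ := exists_lower_cell hbox hT
  obtain ⟨⟨r₁, c₁⟩, hp', hpos', hpi'⟩ := exists_lower_cell hbox hT'
  have hlast := isLastMin_bracketHeight_lower hp hpos hpi
  have hlast' := isLastMin_bracketHeight_lower hp' hpos' hpi'
  dsimp only at heq
  rw [heq] at hlast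
  obtain ⟨rfl, rfl⟩ := Prod.ext_iff.1 (readPos_injOn hp hp' (hlast.eq hlast'))
  rw [lower_eq_raise hp hpos, lower_eq_raise hp hpos'] at heq
  funext r c
  by_cases h : (r, c) = (r₀, c₀)
  · obtain ⟨rfl, rfl⟩ := Prod.mk.inj h
    exact hpi.trans hpi'.symm
  · simpa [h] using congrFun₂ heq r c

end Lower

section Kostka

variable {lam kap : ℕ → ℕ} {N : ℕ}

lemma finite_setOf_skewSSYT_content (hbox : ∀ r c, c < lam r → r < N ∧ c < N) (γ : ℕ → ℕ) :
    {T : ℕ → ℕ → ℕ | IsSkewSSYT lam kap T ∧ ∀ v, skewContentOf lam kap T v = γ v}.Finite := by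
  set S := {T : ℕ → ℕ → ℕ | IsSkewSSYT lam kap T ∧ ∀ v, skewContentOf lam kap T v = γ v}
  rcases S.eq_empty_or_nonempty with hS | ⟨T₀, hT₀⟩
  · rw [hS]
    exact Set.finite_empty
  have hval : ∀ T ∈ S, ∀ q ∈ skewCells lam kap N,
      T q.1 q.2 ∈ (skewCells lam kap N).image fun q => T₀ q.1 q.2 := by
    intro T hT q hq
    have : 0 < skewContentOf lam kap T₀ (T q.1 q.2) := by
      rw [hT₀.2, ← hT.2, skewContentOf_eq_card hbox]
      exact card_pos.2 ⟨q, mem_filter.2 ⟨hq, rfl⟩⟩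
    rw [skewContentOf_eq_card hbox] at this
    obtain ⟨q', hq'⟩ := card_pos.1 this
    exact mem_image.2 ⟨q', (mem_filter.1 hq').1, (mem_filter.1 hq').2⟩
  refine Set.Finite.of_finite_image (f := fun T (q : skewCells lam kap N) => T q.1.1 q.1.2)
    ((Set.Finite.pi' fun _ => ((skewCells lam kap N).image fun q => T₀ q.1 q.2).finite_toSet).subset
      ?_) fun T hT T' hT' heq => ?_
  · rintro _ ⟨T, hT, rfl⟩ q
    exact hval T hT q.1 q.2
  · funext r c
    by_cases hq : (r, c) ∈ skewCells lam kap N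
    · exact congrFun heq ⟨(r, c), hq⟩
    · have hout : c < kap r ∨ lam r ≤ c := by
        rw [mem_skewCells hbox] at hq
        dsimp only at hq
        omega
      rw [hT.1.2.2 r c hout, hT'.1.2.2 r c hout]

theorem skewKostka_le_skewKostka_moveUnit (hlam : Antitone lam) (hkap : Antitone kap)
    (hbox : ∀ r c, c < lam r → r < N ∧ c < N) {γ : ℕ → ℕ} {i : ℕ} (hi : γ (i + 1) < γ i) :
    SkewKostka lam kap γ ≤ SkewKostka lam kap (moveUnit γ i) := by
  refine Set.ncard_le_ncard_of_injOn (lower lam kap N · i) ?_ ?_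
    (finite_setOf_skewSSYT_content hbox _)
  · rintro T ⟨hT, hcontent⟩
    have hlt : skewContentOf lam kap T (i + 1) < skewContentOf lam kap T i := by
      rwa [hcontent, hcontent]
    refine ⟨isSkewSSYT_lower hT hlam hkap hbox hlt, fun v => ?_⟩
    rw [skewContentOf_lower hbox hlt, funext hcontent]
  · exact (lower_injOn hbox).mono fun T hT => by simpa [hT.2] using hi

theorem skewKostka_le_of_dominates (hlam : Antitone lam)
    (hkap : Antitone kap) (hbox : ∀ r c, c < lam r → r < N ∧ c < N) {γ ν : ℕ → ℕ} {B : ℕ}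
    (hν : Antitone ν) (hdom : Dominates γ ν)
    (htail : ∀ r, B ≤ r → ∑ x ∈ range r, γ x = ∑ x ∈ range r, ν x) :
    SkewKostka lam kap γ ≤ SkewKostka lam kap ν := by
  obtain ⟨d, hd⟩ : ∃ d, ∑ r ∈ range B, (∑ x ∈ range r, γ x - ∑ x ∈ range r, ν x) = d := ⟨_, rfl⟩
  induction d using Nat.strong_induction_on generalizing γ with
  | _ d ih =>
  by_cases hne : γ = ν
  · rw [hne]
  obtain ⟨i, hi, hlt⟩ := exists_lt_of_dominates_of_ne hν hdom htail hne
  have hiB : i + 1 < B := by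
    by_contra h
    have := htail (i + 1) (by omega)
    omega
  have hsum := sum_range_moveUnit (γ := γ) (i := i) (by omega)
  refine (skewKostka_le_skewKostka_moveUnit hlam hkap hbox hi).trans
    (ih _ ?_ (γ := moveUnit γ i) (fun r => ?_) (fun r hr => ?_) rfl)
  · rw [← hd]
    refine sum_lt_sum (fun r _ => ?_) ⟨i + 1, mem_range.2 hiB, ?_⟩
    · have := hsum r
      omega
    · have := hsum (i + 1)
      rw [if_pos rfl] at this
      omega
  · have := hsum r
    have := hdom r
    split_ifs at * with h
    · subst h
      omega
    · omega
  · have := hsum r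
    rw [if_neg (by omega), htail r hr] at this
    exact this

end Kostka

theorem kostka_note_stmt16_general {n : ℕ} (lam kap μ ν : ℕ → ℕ)
    (hlam : Antitone lam) (hkap : Antitone kap)
    (hfin : (Function.support lam).Finite)
    (hμ : IsPartition n μ) (hν : IsPartition n ν)
    (h : Dominates μ ν) :
    SkewKostka lam kap μ ≤ SkewKostka lam kap ν := by
  obtain ⟨N, hbox⟩ := exists_box hlam hfin
  obtain ⟨-, hμfin, hμsum⟩ := hμ
  obtain ⟨hνanti, hνfin, hνsum⟩ := hν
  obtain ⟨Bμ, hBμ⟩ := hμfin.bddAbove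
  obtain ⟨Bν, hBν⟩ := hνfin.bddAbove
  refine skewKostka_le_of_dominates hlam hkap hbox hνanti h (B := max Bμ Bν + 1) fun r hr => ?_
  rw [sum_range_eq_finsum hBμ (by omega), sum_range_eq_finsum hBν (by omega), hμsum, hνsum]

theorem kostka_note_stmt16 {n : ℕ} (lam kap μ ν : ℕ → ℕ)
    (hlam : Antitone lam) (hkap : Antitone kap)
    (hfin : (Function.support lam).Finite)
    (hsub : ∀ r, kap r ≤ lam r)
    (hsize : ∑ᶠ r, (lam r - kap r) = n)
    (hμ : IsPartition n μ) (hν : IsPartition n ν)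
    (h : Dominates μ ν) :
    SkewKostka lam kap μ ≤ SkewKostka lam kap ν :=
  kostka_note_stmt16_general lam kap μ ν hlam hkap hfin hμ hν h
end
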